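/- arXiv:2004.05018 — 2 statements merged into one kernel-verified Lean document; each statement's English description precedes it below -/
import Mathlib

section
/- Let G be a (2P_1+P_2, ⋈)-free graph, and let X ⊆ V(G) be such that the subgraph of G induced by X is isomorphic to K_r ⊟ K_r for some r ≥ 5, where X is maximal in the sense that there are no r' > r and S ⊆ V(G)∖X with the subgraph induced by X ∪ S isomorphic to K_{r'} ⊟ K_{r'}. Then there is a branch decomposition of G of mim-width exactly 2; in particular, mimw(G) ≤ 2. -/
open SimpleGraph

/-- `M` is an induced matching in the bipartite graph `G[X,Y]`: every pair in `M` is an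
edge of `G` with first endpoint in `X` and second endpoint in `Y`, the pairs are pairwise
vertex-disjoint, and no edge of `G` between `X` and `Y` joins vertices incident to
distinct pairs of `M`. -/
def IsInducedCutMatching {V : Type*} (G : SimpleGraph V) (X Y : Set V)
    (M : Finset (V × V)) : Prop :=
  (∀ p ∈ M, p.1 ∈ X ∧ p.2 ∈ Y ∧ G.Adj p.1 p.2) ∧
  ∀ p ∈ M, ∀ q ∈ M, p ≠ q →
    p.1 ≠ q.1 ∧ p.2 ≠ q.2 ∧ p.1 ≠ q.2 ∧ p.2 ≠ q.1 ∧
    ¬ G.Adj p.1 q.2 ∧ ¬ G.Adj q.1 p.2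

/-- `cutmim G X Y` is the maximum size of an induced matching in `G[X,Y]`. -/
noncomputable def cutmim {V : Type*} (G : SimpleGraph V) (X Y : Set V) : ℕ :=
  sSup {n : ℕ | ∃ M : Finset (V × V), IsInducedCutMatching G X Y M ∧ M.card = n}

/-- A branch decomposition of a graph `G`: a finite tree `T` of maximum degree at most 3
together with a bijection `δ` from the vertices of `G` to the leaves of `T`. -/
structure BranchDecomp {V : Type*} (G : SimpleGraph V) where
  L : Type
  T : SimpleGraph L
  finite : Finite L
  connected : T.Connected
  acyclic : T.IsAcyclic
  subcubic : ∀ x : L, (T.neighborSet x).ncard ≤ 3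
  δ : V → L
  δ_inj : Function.Injective δ
  δ_leaf : ∀ v : V, (T.neighborSet (δ v)).ncard = 1
  δ_surj : ∀ x : L, (T.neighborSet x).ncard = 1 → ∃ v : V, δ v = x

/-- The side of the cut of `V(G)` induced by the tree edge `ab`: the set of vertices of
`G` mapped by `δ` into the component of `T - ab` containing `a`. -/
def BranchDecomp.side {V : Type*} {G : SimpleGraph V} (B : BranchDecomp G)
    (a b : B.L) : Set V :=
  {v : V | (B.T.deleteEdges {s(a, b)}).Reachable (B.δ v) a}

/-- The mim-width of a branch decomposition: the maximum over tree edges `ab` of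
`cutmim G (A_e, V(G) \ A_e)`. -/
noncomputable def BranchDecomp.width {V : Type*} {G : SimpleGraph V}
    (B : BranchDecomp G) : ℕ :=
  sSup {n : ℕ | ∃ a b : B.L, B.T.Adj a b ∧ n = cutmim G (B.side a b) (B.side a b)ᶜ}

/-- The mim-width of a graph: the minimum width over all branch decompositions
(by convention `0` if no branch decomposition exists, e.g. for graphs with fewer
than two vertices). -/
noncomputable def mimw {V : Type*} (G : SimpleGraph V) : ℕ :=
  sInf {n : ℕ | ∃ B : BranchDecomp G, B.width = n}

/-- `G` is `H`-free: no induced subgraph of `G` is isomorphic to `H`. -/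
def HFree {V W : Type*} (G : SimpleGraph V) (H : SimpleGraph W) : Prop :=
  ¬ ∃ S : Set V, Nonempty ((G.induce S) ≃g H)

/-- The disjoint union of two graphs. -/
def sumGraph {α β : Type*} (G : SimpleGraph α) (H : SimpleGraph β) :
    SimpleGraph (α ⊕ β) :=
  SimpleGraph.fromRel (fun a b =>
    (∃ x y, a = Sum.inl x ∧ b = Sum.inl y ∧ G.Adj x y) ∨
    (∃ x y, a = Sum.inr x ∧ b = Sum.inr y ∧ H.Adj x y))

/-- `tP₂`: the disjoint union of `t` single edges. -/
def tP2graph (t : ℕ) : SimpleGraph (Fin t × Fin 2) :=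
  SimpleGraph.fromRel (fun a b => a.1 = b.1)

/-- `sP₁ + P₂`: `s` isolated vertices together with a single edge. -/
def sP1P2graph (s : ℕ) : SimpleGraph (Fin s ⊕ Fin 2) :=
  SimpleGraph.fromRel (fun a b => ∃ i j : Fin 2, a = Sum.inr i ∧ b = Sum.inr j)

/-- `K_r ⊟ K_r`: two disjoint copies of `K_r` joined by a perfect matching. -/
def KboxK (r : ℕ) : SimpleGraph (Fin r ⊕ Fin r) :=
  SimpleGraph.fromRel (fun a b =>
    (∃ i j, a = Sum.inl i ∧ b = Sum.inl j) ∨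
    (∃ i j, a = Sum.inr i ∧ b = Sum.inr j) ∨
    (∃ i, a = Sum.inl i ∧ b = Sum.inr i))

/-- `K_r ⊟ rP₁`: a clique `a_1, …, a_r`, an independent set `b_1, …, b_r`, and the
matching edges `a_i b_i`. -/
def KboxI (r : ℕ) : SimpleGraph (Fin r ⊕ Fin r) :=
  SimpleGraph.fromRel (fun a b =>
    (∃ i j, a = Sum.inl i ∧ b = Sum.inl j) ∨
    (∃ i, a = Sum.inl i ∧ b = Sum.inr i))

/-- `K_r ⊟ P₁`: `K_r` plus a pendant vertex attached to exactly one vertex of `K_r`. -/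
def KboxP1 (r : ℕ) : SimpleGraph (Fin r ⊕ Unit) :=
  SimpleGraph.fromRel (fun a b =>
    (∃ i j : Fin r, a = Sum.inl i ∧ b = Sum.inl j) ∨
    (∃ i : Fin r, i.val = 0 ∧ a = Sum.inl i ∧ b = Sum.inr ()))

/-- The claw `K_{1,3}`: vertex `0` adjacent to the three leaves `1`, `2`, `3`. -/
def clawGraph : SimpleGraph (Fin 4) :=
  SimpleGraph.fromRel (fun a _ => a = 0)

/-- The diamond: `K_4` minus the edge `{2,3}`. -/
def diamondGraph : SimpleGraph (Fin 4) :=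
  SimpleGraph.fromRel (fun a b => ¬(a = 2 ∧ b = 3) ∧ ¬(a = 3 ∧ b = 2))

/-- The bowtie `⋈`: two triangles `{0,1,2}` and `{0,3,4}` sharing the vertex `0`. -/
def bowtieGraph : SimpleGraph (Fin 5) :=
  SimpleGraph.fromRel (fun a b => a = 0 ∨ (a = 1 ∧ b = 2) ∨ (a = 3 ∧ b = 4))

/-- `P₁ + 2P₂`: the isolated vertex `0` and the two disjoint edges `12` and `34`. -/
def P1plus2P2graph : SimpleGraph (Fin 5) :=
  SimpleGraph.fromRel (fun a b => (a = 1 ∧ b = 2) ∨ (a = 3 ∧ b = 4))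

/-- The subdivided claw `S_{1,1,5}`: centre `0` with leaves `1`, `2` at distance one and
the path `0-3-4-5-6-7`. -/
def S115graph : SimpleGraph (Fin 8) :=
  SimpleGraph.fromRel (fun a b =>
    (a = 0 ∧ b = 1) ∨ (a = 0 ∧ b = 2) ∨ (a = 0 ∧ b = 3) ∨
    (a = 3 ∧ b = 4) ∨ (a = 4 ∧ b = 5) ∨ (a = 5 ∧ b = 6) ∨ (a = 6 ∧ b = 7))

/-- The Ramsey number `R(a,b)`: the least `N` such that every graph on at least `N`
vertices contains a clique of size `a` or an independent set of size `b`. -/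
noncomputable def ramsey (a b : ℕ) : ℕ :=
  sInf {N : ℕ | ∀ M : ℕ, N ≤ M → ∀ G : SimpleGraph (Fin M),
    (∃ s : Finset (Fin M), G.IsNClique a s) ∨ (∃ s : Finset (Fin M), Gᶜ.IsNClique b s)}

/-- The `h × 2r` grid with the vertical edges prescribed by the wall construction:
the vertical edge between rows `i` and `i+1` of column `j` (all `0`-indexed) is kept
exactly when `i ≡ j (mod 2)`. -/
def wallPre (h r : ℕ) : SimpleGraph (Fin h × Fin (2 * r)) :=
  SimpleGraph.fromRel (fun a b =>
    (a.1 = b.1 ∧ (a.2 : ℕ) + 1 = (b.2 : ℕ)) ∨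
    (a.2 = b.2 ∧ (a.1 : ℕ) + 1 = (b.1 : ℕ) ∧ (a.1 : ℕ) % 2 = (a.2 : ℕ) % 2))

/-- The elementary `(h × r)`-wall: delete from `wallPre h r` all vertices of degree 1. -/
def elementaryWall (h r : ℕ) :
    SimpleGraph {v : Fin h × Fin (2 * r) // ((wallPre h r).neighborSet v).ncard ≠ 1} :=
  (wallPre h r).induce {v | ((wallPre h r).neighborSet v).ncard ≠ 1}

/-- The graph obtained from `W` by simultaneously performing a clique implant on every
vertex of degree `3`: a degree-3 vertex `v` is replaced by the triangle of vertices
`(v, some u)` for `u` a neighbour of `v`, and `(v, some u)` inherits the edge of `v`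
towards `u`; vertices of degree `≠ 3` are kept as `(v, none)`. -/
def cliqueImplantAll {V : Type*} (W : SimpleGraph V) :
    SimpleGraph {p : V × Option V //
      (p.2 = none ∧ (W.neighborSet p.1).ncard ≠ 3) ∨
      (∃ u, p.2 = some u ∧ (W.neighborSet p.1).ncard = 3 ∧ W.Adj p.1 u)} :=
  SimpleGraph.fromRel (fun a b =>
    (a.1.1 = b.1.1 ∧ a.1.2 ≠ b.1.2) ∨
    (W.Adj a.1.1 b.1.1 ∧ (a.1.2 = none ∨ a.1.2 = some b.1.1) ∧
      (b.1.2 = none ∨ b.1.2 = some a.1.1)))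

/-- A net-wall: the graph obtained from the elementary `(n × n)`-wall by performing a
clique implant on every vertex of degree `3`. -/
def netWall (n : ℕ) := cliqueImplantAll (elementaryWall n n)

/-- The chordal bipartite graph `G'` of Brault-Baron, Capelli and Mengel, built from a
graph `G`: vertices `x_v` (`Sum.inl v`), `y_v` (`Sum.inr (Sum.inl v)`), and for every
ordered adjacent pair `p = (u,v)` two vertices `q_p = (p,0)` and `t_p = (p,1)`;
`X` is complete to `Y`, and for each adjacent pair `(u,v)` there is a path
`x_u - q_{(u,v)} - t_{(u,v)} - y_v`. -/
def BCMgraph {V : Type*} (G : SimpleGraph V) :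
    SimpleGraph (V ⊕ V ⊕ ({p : V × V // G.Adj p.1 p.2} × Fin 2)) :=
  SimpleGraph.fromRel (fun a b =>
    (∃ u w : V, a = Sum.inl u ∧ b = Sum.inr (Sum.inl w)) ∨
    (∃ p : {p : V × V // G.Adj p.1 p.2},
      a = Sum.inl p.1.1 ∧ b = Sum.inr (Sum.inr (p, 0))) ∨
    (∃ p : {p : V × V // G.Adj p.1 p.2},
      a = Sum.inr (Sum.inr (p, 0)) ∧ b = Sum.inr (Sum.inr (p, 1))) ∨
    (∃ p : {p : V × V // G.Adj p.1 p.2},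
      a = Sum.inr (Sum.inr (p, 1)) ∧ b = Sum.inr (Sum.inl p.1.2)))


/-!
Write `A = {aᵢ}` and `B = {bᵢ}` for the two cliques of the induced `K_r ⊟ K_r`. Freeness from
`2P₁ + P₂` and from the bowtie forces every other vertex to be complete to `B` with at most one
neighbour in `A`, or complete to `A` with at most one neighbour in `B`. Vertices `p` of the first
kind form a clique together with `B`, those `q` of the second kind one together with `A`, and no
edge joins the two kinds: it would close a bowtie, or, when neither end has a neighbour in the other
clique, extend `X` to a `K_{r+1} ⊟ K_{r+1}`. So `G` is covered by two cliques, and the only edges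
between them are `aᵢbᵢ`, `aᵢp` and `bᵢq`.

Two edges of an induced matching across a cut that start in the same clique both cross to the
other one; hence if at most one matching edge crosses in each direction, the matching has at most
two edges. Listing the vertices block by block as `aᵢ`, its `p`'s, `bᵢ`, its `q`'s gives a linear
order in which every prefix cut has this property, so the caterpillar decomposition along it has
mim-width at most `2`; the prefix ending at `b₀` carries the induced matching `a₀a₁, b₀b₁`.
-/

namespace SimpleGraph

variable {L : Type*} {H : SimpleGraph L}

lemma Reachable.iff_of_forall_adj {π : L → Prop} (hπ : ∀ x y, H.Adj x y → (π x ↔ π y))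
    {x y : L} (h : H.Reachable x y) : π x ↔ π y := by
  obtain ⟨w⟩ := h
  induction w with
  | nil => rfl
  | cons hadj _ ih => exact (hπ _ _ hadj).trans ih

lemma Connected.reachable_deleteEdges_or (hH : H.Connected) (a b x : L) :
    (H.deleteEdges {s(a, b)}).Reachable x a ∨ (H.deleteEdges {s(a, b)}).Reachable x b := by
  suffices ∀ c (w : H.Walk x c), c = a → _ from this a (hH.preconnected x a).some rfl
  intro c w hc
  induction w with
  | nil => exact Or.inl (hc ▸ .rfl)
  | @cons x y _ hxy _ ih =>
    by_cases he : s(x, y) = s(a, b)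
    · rcases Sym2.eq_iff.1 he with ⟨rfl, -⟩ | ⟨rfl, -⟩
      exacts [Or.inl .rfl, Or.inr .rfl]
    · have hxy' : (H.deleteEdges {s(a, b)}).Adj x y := by simp [hxy, he]
      exact (ih hc).imp hxy'.reachable.trans hxy'.reachable.trans

lemma Connected.reachable_deleteEdges_iff (hH : H.Connected) {a b : L} {π : L → Prop}
    (hπ : ∀ x y, (H.deleteEdges {s(a, b)}).Adj x y → (π x ↔ π y)) (ha : π a) (hb : ¬π b)
    (x : L) : (H.deleteEdges {s(a, b)}).Reachable x a ↔ π x := by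
  refine ⟨fun h => (h.iff_of_forall_adj hπ).2 ha, fun h => ?_⟩
  refine (hH.reachable_deleteEdges_or a b x).resolve_right fun h' => hb ?_
  exact (h'.iff_of_forall_adj hπ).1 h

end SimpleGraph

open SimpleGraph

section Cutmim

variable {V : Type*} {G : SimpleGraph V} {X Y : Set V} {M : Finset (V × V)}

lemma cutmim_le {k : ℕ} (h : ∀ M, IsInducedCutMatching G X Y M → M.card ≤ k) :
    cutmim G X Y ≤ k :=
  csSup_le' fun _ ⟨M, hM, hn⟩ => hn ▸ h M hM

lemma IsInducedCutMatching.card_le_cutmim [Finite V] (hM : IsInducedCutMatching G X Y M) :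
    M.card ≤ cutmim G X Y := by
  have := Fintype.ofFinite V
  exact le_csSup ⟨Fintype.card (V × V), fun _ ⟨N, _, hN⟩ => hN ▸ N.card_le_univ⟩ ⟨M, hM, rfl⟩

lemma IsInducedCutMatching.map_swap (hM : IsInducedCutMatching G X Y M) :
    IsInducedCutMatching G Y X (M.map (Equiv.prodComm V V).toEmbedding) := by
  refine ⟨?_, ?_⟩
  · simp only [Finset.mem_map_equiv]
    intro p hp
    obtain ⟨h1, h2, h3⟩ := hM.1 _ hp
    exact ⟨h2, h1, h3.symm⟩
  · simp only [Finset.mem_map_equiv]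
    intro p hp q hq hpq
    obtain ⟨h1, h2, h3, h4, h5, h6⟩ :=
      hM.2 _ hp _ hq ((Equiv.prodComm V V).symm.injective.ne hpq)
    exact ⟨h2, h1, h4, h3, fun h => h6 h.symm, fun h => h5 h.symm⟩

lemma cutmim_comm : cutmim G Y X = cutmim G X Y := by
  unfold cutmim
  congr 1
  ext n
  constructor <;> rintro ⟨_, hM, rfl⟩ <;> exact ⟨_, hM.map_swap, Finset.card_map _⟩

lemma cutmim_le_one_of_subsingleton (hX : X.Subsingleton) : cutmim G X Y ≤ 1 :=
  cutmim_le fun _ hM => Finset.card_le_one.2 fun p hp q hq => by_contra fun hpq =>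
    (hM.2 p hp q hq hpq).1 (hX (hM.1 p hp).1 (hM.1 q hq).1)

lemma two_le_cutmim [Finite V] {S : Set V} {u₁ w₁ u₂ w₂ : V} (hu₁ : u₁ ∈ S) (hu₂ : u₂ ∈ S)
    (hw₁ : w₁ ∉ S) (hw₂ : w₂ ∉ S) (h₁ : G.Adj u₁ w₁) (h₂ : G.Adj u₂ w₂)
    (h₁₂ : ¬G.Adj u₁ w₂) (h₂₁ : ¬G.Adj u₂ w₁) (hu : u₁ ≠ u₂) : 2 ≤ cutmim G S Sᶜ := by
  classical
  have hM : IsInducedCutMatching G S Sᶜ {(u₁, w₁), (u₂, w₂)} := by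
    refine ⟨by simp [*], ?_⟩
    simp only [Finset.mem_insert, Finset.mem_singleton]
    rintro p (rfl | rfl) q (rfl | rfl) hpq <;> dsimp only
    · exact absurd rfl hpq
    · exact ⟨hu, fun h => h₁₂ (h ▸ h₁), fun h => hw₂ (h ▸ hu₁), fun h => hw₁ (h ▸ hu₂), h₁₂, h₂₁⟩
    · exact ⟨hu.symm, fun h => h₂₁ (h ▸ h₂), fun h => hw₁ (h ▸ hu₂), fun h => hw₂ (h ▸ hu₁),
        h₂₁, h₁₂⟩
    · exact absurd rfl hpq
  have hcard : ({(u₁, w₁), (u₂, w₂)} : Finset (V × V)).card = 2 :=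
    Finset.card_pair fun h => hu (congrArg Prod.fst h)
  exact hcard ▸ hM.card_le_cutmim

end Cutmim

lemma exists_equivFin_lt_of_lt {V α : Type*} [Fintype V] [LinearOrder α] (key : V → α) :
    ∃ σ : V ≃ Fin (Fintype.card V), ∀ v w, key v < key w → σ v < σ w := by
  let ρ := Fintype.equivFin V
  let τ := Tuple.sort (key ∘ ρ.symm)
  refine ⟨ρ.trans τ.symm, fun v w h => lt_of_not_ge fun hle => h.not_ge ?_⟩
  simpa [ρ, τ] using Tuple.monotone_sort (key ∘ ρ.symm) hle

def IsLowerCut {V : Type*} (f : V → ℕ) (S : Set V) : Prop := ∀ v w, v ∈ S → f w < f v → w ∈ S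

/-- If the blocks of `p` and `q` differ, the second end of the edge in the earlier block lies
below the first end of the other edge, so it would be in `S`. -/
lemma fst_eq_of_isLowerCut {V : Type*} {S : Set V} {f : V → ℕ} (hS : IsLowerCut f S)
    {d r : ℕ} {g : Fin r → V} {p q : V × V}
    (hp₁ : p.1 ∈ S) (hp₂ : p.2 ∉ S) (hq₁ : q.1 ∈ S) (hq₂ : q.2 ∉ S)
    (hp : ∃ i : Fin r, p.1 = g i ∧ f p.1 / d = i ∧ f p.2 / d = i)
    (hq : ∃ i : Fin r, q.1 = g i ∧ f q.1 / d = i ∧ f q.2 / d = i) : p.1 = q.1 := by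
  obtain ⟨i, hpi, hi, hi'⟩ := hp
  obtain ⟨j, hqj, hj, hj'⟩ := hq
  suffices (i : ℕ) = j by rw [hpi, hqj, Fin.ext this]
  rcases lt_trichotomy (i : ℕ) j with h | h | h
  · exact absurd (hS _ _ hq₁ (Nat.lt_of_div_lt_div (c := d) (by omega))) hp₂
  · exact h
  · exact absurd (hS _ _ hp₁ (Nat.lt_of_div_lt_div (c := d) (by omega))) hq₂

section TwoCliques

variable {V : Type*} {G : SimpleGraph V} {X Y C : Set V} {M : Finset (V × V)}

lemma IsInducedCutMatching.snd_notMem_of_isClique (hM : IsInducedCutMatching G X Y M)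
    (hC : G.IsClique C) {p q : V × V} (hp : p ∈ M) (hq : q ∈ M) (hpq : p ≠ q)
    (hp₁ : p.1 ∈ C) : q.2 ∉ C := fun hq₂ =>
  have h := hM.2 p hp q hq hpq
  h.2.2.2.2.1 (hC hp₁ hq₂ h.2.2.1)

lemma IsInducedCutMatching.card_le_two (hM : IsInducedCutMatching G X Y M)
    (hC : G.IsClique C) (hC' : G.IsClique Cᶜ)
    (hleave : ∀ p ∈ M, ∀ q ∈ M, p.1 ∈ C → p.2 ∉ C → q.1 ∈ C → q.2 ∉ C → p.1 = q.1)
    (hleave' : ∀ p ∈ M, ∀ q ∈ M, p.1 ∉ C → p.2 ∈ C → q.1 ∉ C → q.2 ∈ C → p.1 = q.1) :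
    M.card ≤ 2 := by
  have hsame : ∀ p ∈ M, ∀ q ∈ M, p ≠ q → (p.1 ∈ C ↔ q.1 ∈ C) → False := by
    intro p hp q hq hpq hpC
    have hfst : p.1 ≠ q.1 := (hM.2 p hp q hq hpq).1
    by_cases h : p.1 ∈ C
    · exact hfst (hleave p hp q hq h (hM.snd_notMem_of_isClique hC hq hp hpq.symm (hpC.1 h))
        (hpC.1 h) (hM.snd_notMem_of_isClique hC hp hq hpq h))
    · have h' : q.1 ∉ C := fun h' => h (hpC.2 h')
      exact hfst (hleave' p hp q hq h
        (not_not.1 (hM.snd_notMem_of_isClique hC' hq hp hpq.symm h')) h'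
        (not_not.1 (hM.snd_notMem_of_isClique hC' hp hq hpq h)))
  by_contra! hcard
  obtain ⟨p₁, hp₁, p₂, hp₂, p₃, hp₃, h₁₂, h₁₃, h₂₃⟩ := Finset.two_lt_card.1 hcard
  have := hsame p₁ hp₁ p₂ hp₂ h₁₂
  have := hsame p₁ hp₁ p₃ hp₃ h₁₃
  have := hsame p₂ hp₂ p₃ hp₃ h₂₃
  tauto

end TwoCliques

namespace BranchDecomp

variable {V : Type*} {G : SimpleGraph V} (B : BranchDecomp G)

lemma cutmim_le_width {a b : B.L} (hab : B.T.Adj a b) :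
    cutmim G (B.side a b) (B.side a b)ᶜ ≤ B.width := by
  have := B.finite
  refine le_csSup ((Set.finite_range fun e : B.L × B.L =>
    cutmim G (B.side e.1 e.2) (B.side e.1 e.2)ᶜ).bddAbove.mono ?_) ⟨a, b, hab, rfl⟩
  rintro _ ⟨x, y, -, rfl⟩
  exact ⟨(x, y), rfl⟩

lemma width_le {k : ℕ} (h : ∀ a b, B.T.Adj a b → cutmim G (B.side a b) (B.side a b)ᶜ ≤ k) :
    B.width ≤ k :=
  csSup_le' fun _ ⟨a, b, hab, hn⟩ => hn ▸ h a b hab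

end BranchDecomp

lemma Fin.exists_pair_notMem {r : ℕ} (S : Set (Fin r)) (h : S.ncard + 2 ≤ r) :
    ∃ i j, i ≠ j ∧ i ∉ S ∧ j ∉ S := by
  have : 1 < Sᶜ.ncard := by rw [Set.ncard_compl, Nat.card_eq_fintype_card, Fintype.card_fin]; omega
  obtain ⟨i, j, hi, hj, hij⟩ := (Set.one_lt_ncard_iff (Set.toFinite _)).1 this
  exact ⟨i, j, hij, hi, hj⟩

lemma Fin.exists_notMem {r : ℕ} (S : Set (Fin r)) (h : S.ncard < r) : ∃ i, i ∉ S := by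
  by_contra! h'
  rw [Set.eq_univ_of_forall h', Set.ncard_univ, Nat.card_eq_fintype_card, Fintype.card_fin] at h
  exact h.false

lemma Set.Subsingleton.ncard_insert_le_two {α : Type*} [Finite α] {S : Set α}
    (hS : S.Subsingleton) (a : α) : (insert a S).ncard ≤ 2 :=
  (Set.ncard_insert_le a S).trans (by have := Set.ncard_le_one_iff_subsingleton.2 hS; omega)


section Caterpillar

variable {n : ℕ}

/-- The caterpillar on `n` spine vertices `(i, false)`, each carrying one leaf `(i, true)`. -/
def caterpillar (n : ℕ) : SimpleGraph (Fin n × Bool) where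
  Adj x y := (x.2 = false ∧ y.2 = false ∧ (pathGraph n).Adj x.1 y.1) ∨ (x.1 = y.1 ∧ x.2 ≠ y.2)
  symm := ⟨fun x y => by
    rintro (⟨hx, hy, h⟩ | ⟨h, h'⟩)
    exacts [Or.inl ⟨hy, hx, h.symm⟩, Or.inr ⟨h.symm, Ne.symm h'⟩]⟩
  loopless := ⟨fun x => by
    rintro (⟨-, -, h⟩ | ⟨-, h⟩)
    exacts [(pathGraph n).loopless.irrefl _ h, h rfl]⟩

lemma caterpillar_adj {x y : Fin n × Bool} : (caterpillar n).Adj x y ↔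
    (x.2 = false ∧ y.2 = false ∧ (x.1.val + 1 = y.1.val ∨ y.1.val + 1 = x.1.val)) ∨
      (x.1 = y.1 ∧ x.2 ≠ y.2) := by
  rw [← pathGraph_adj]
  rfl

lemma caterpillar_connected (hn : 0 < n) : (caterpillar n).Connected := by
  have hspine : ∀ i j : Fin n, (caterpillar n).Reachable (i, false) (j, false) := fun i j =>
    (pathGraph_preconnected n i j).map ⟨fun i => (i, false), fun h => Or.inl ⟨rfl, rfl, h⟩⟩
  have hleaf : ∀ x : Fin n × Bool, (caterpillar n).Reachable x (x.1, false) := by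
    rintro ⟨i, (_ | _)⟩
    exacts [.rfl, Adj.reachable (Or.inr ⟨rfl, by simp⟩)]
  have : Nonempty (Fin n × Bool) := ⟨(⟨0, hn⟩, false)⟩
  exact .mk fun x y => (hleaf x).trans ((hspine _ _).trans (hleaf y).symm)

lemma caterpillar_deleteEdges_spine_adj {i j : Fin n} (hij : i.val + 1 = j.val) {x y : Fin n × Bool}
    (h : ((caterpillar n).deleteEdges {s((i, false), (j, false))}).Adj x y) :
    x.1 ≤ i ↔ y.1 ≤ i := by
  obtain ⟨x, c⟩ := x
  obtain ⟨y, d⟩ := y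
  simp only [deleteEdges_adj, caterpillar_adj, Set.mem_singleton_iff, Sym2.eq_iff,
    Prod.ext_iff, Fin.ext_iff, Fin.le_iff_val_le_val] at h ⊢
  cases c <;> cases d <;> simp at h <;> omega

lemma caterpillar_deleteEdges_leaf_adj (i : Fin n) {x y : Fin n × Bool}
    (h : ((caterpillar n).deleteEdges {s((i, true), (i, false))}).Adj x y) :
    x = (i, true) ↔ y = (i, true) := by
  obtain ⟨x, c⟩ := x
  obtain ⟨y, d⟩ := y
  simp only [deleteEdges_adj, caterpillar_adj, Set.mem_singleton_iff, Sym2.eq_iff,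
    Prod.ext_iff, Fin.ext_iff] at h ⊢
  cases c <;> cases d <;> simp at h ⊢ <;> omega

variable {i j : Fin n}

lemma caterpillar_reachable_deleteEdges_spine (hij : i.val + 1 = j.val) (x : Fin n × Bool) :
    ((caterpillar n).deleteEdges {s((i, false), (j, false))}).Reachable x (i, false) ↔
      x.1 ≤ i := by
  refine (caterpillar_connected i.pos).reachable_deleteEdges_iff (π := fun x => x.1 ≤ i)
    (fun _ _ => caterpillar_deleteEdges_spine_adj hij) le_rfl ?_ x
  simp only [not_le, Fin.lt_def]
  omega

lemma caterpillar_reachable_deleteEdges_spine' (hij : i.val + 1 = j.val) (x : Fin n × Bool) :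
    ((caterpillar n).deleteEdges {s((j, false), (i, false))}).Reachable x (j, false) ↔
      ¬x.1 ≤ i := by
  refine (caterpillar_connected i.pos).reachable_deleteEdges_iff (π := fun x => ¬x.1 ≤ i)
    (fun x y h => ?_) ?_ (by simp) x
  · rw [Sym2.eq_swap] at h
    exact not_congr (caterpillar_deleteEdges_spine_adj hij h)
  · simp only [not_le, Fin.lt_def]
    omega

lemma caterpillar_reachable_deleteEdges_leaf (x : Fin n × Bool) :
    ((caterpillar n).deleteEdges {s((i, true), (i, false))}).Reachable x (i, true) ↔
      x = (i, true) :=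
  (caterpillar_connected i.pos).reachable_deleteEdges_iff (π := (· = (i, true)))
    (fun _ _ => caterpillar_deleteEdges_leaf_adj i) rfl (by simp) x

lemma caterpillar_reachable_deleteEdges_leaf' (x : Fin n × Bool) :
    ((caterpillar n).deleteEdges {s((i, false), (i, true))}).Reachable x (i, false) ↔
      x ≠ (i, true) := by
  refine (caterpillar_connected i.pos).reachable_deleteEdges_iff (π := (· ≠ (i, true)))
    (fun x y h => ?_) (by simp) (by simp) x
  rw [Sym2.eq_swap] at h
  exact not_congr (caterpillar_deleteEdges_leaf_adj i h)

lemma caterpillar_isAcyclic : (caterpillar n).IsAcyclic := by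
  refine isAcyclic_iff_forall_adj_isBridge.2 fun x y hxy => ?_
  obtain ⟨i, c⟩ := x
  obtain ⟨j, d⟩ := y
  rw [isBridge_iff]
  intro hr
  rcases caterpillar_adj.1 hxy with ⟨rfl, rfl, h | h⟩ | ⟨rfl, hcd⟩
  · have := (caterpillar_reachable_deleteEdges_spine h (j, false)).1 hr.symm
    rw [Fin.le_def] at this
    omega
  · exact (caterpillar_reachable_deleteEdges_spine' h (j, false)).1 hr.symm le_rfl
  · cases c <;> cases d <;> simp only [ne_eq, not_true_eq_false] at hcd
    · exact (caterpillar_reachable_deleteEdges_leaf' (i, true)).1 hr.symm rfl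
    · exact absurd ((caterpillar_reachable_deleteEdges_leaf (i, false)).1 hr.symm) (by simp)

lemma caterpillar_neighborSet_leaf (i : Fin n) :
    (caterpillar n).neighborSet (i, true) = {(i, false)} := by
  ext ⟨j, d⟩
  cases d <;> simp [caterpillar_adj, eq_comm]

lemma caterpillar_ncard_neighborSet_le (x : Fin n × Bool) :
    ((caterpillar n).neighborSet x).ncard ≤ 3 := by
  have hsub : (caterpillar n).neighborSet x ⊆ {(x.1, !x.2)} ∪
      {y | y.2 = false ∧ y.1.val + 1 = x.1.val} ∪ {y | y.2 = false ∧ x.1.val + 1 = y.1.val} := by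
    rintro ⟨j, d⟩ h
    obtain ⟨i, c⟩ := x
    rcases caterpillar_adj.1 h with ⟨rfl, rfl, h | h⟩ | ⟨rfl, h⟩
    · exact Or.inr ⟨rfl, h⟩
    · exact Or.inl (Or.inr ⟨rfl, h⟩)
    · cases c <;> cases d <;> simp_all
  have h₁ : ({y | y.2 = false ∧ y.1.val + 1 = x.1.val} : Set (Fin n × Bool)).Subsingleton := by
    rintro ⟨a, c⟩ ⟨ha, ha'⟩ ⟨b, d⟩ ⟨hb, hb'⟩
    simp only at ha ha' hb hb'
    exact Prod.ext (Fin.ext (by dsimp only; omega)) (ha.trans hb.symm)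
  have h₂ : ({y | y.2 = false ∧ x.1.val + 1 = y.1.val} : Set (Fin n × Bool)).Subsingleton := by
    rintro ⟨a, c⟩ ⟨ha, ha'⟩ ⟨b, d⟩ ⟨hb, hb'⟩
    simp only at ha ha' hb hb'
    exact Prod.ext (Fin.ext (by dsimp only; omega)) (ha.trans hb.symm)
  calc ((caterpillar n).neighborSet x).ncard
      ≤ ({(x.1, !x.2)} : Set (Fin n × Bool)).ncard + 1 + 1 := by
        refine (Set.ncard_le_ncard hsub).trans ((Set.ncard_union_le _ _).trans (add_le_add
          ((Set.ncard_union_le _ _).trans (add_le_add le_rfl ?_)) ?_)) <;>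
        exact Set.ncard_le_one_iff_subsingleton.2 ‹_›
    _ = 3 := by rw [Set.ncard_singleton]

lemma caterpillar_ncard_neighborSet_spine_ne_one (hn : 2 ≤ n) (i : Fin n) :
    ((caterpillar n).neighborSet (i, false)).ncard ≠ 1 := by
  have := Fin.nontrivial_iff_two_le.2 hn
  obtain ⟨j, hij⟩ := (pathGraph_preconnected n).exists_adj_of_nontrivial i
  intro h
  obtain ⟨z, hz⟩ := Set.ncard_eq_one.1 h
  have h₁ : (i, true) ∈ (caterpillar n).neighborSet (i, false) := Or.inr ⟨rfl, by simp⟩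
  have h₂ : (j, false) ∈ (caterpillar n).neighborSet (i, false) := Or.inl ⟨rfl, rfl, hij⟩
  rw [hz, Set.mem_singleton_iff] at h₁ h₂
  simpa using h₁.trans h₂.symm

end Caterpillar

section CaterpillarDecomp

variable {V : Type*} (G : SimpleGraph V) {n : ℕ} (σ : V ≃ Fin n) (hn : 2 ≤ n)

def caterpillarDecomp : BranchDecomp G where
  L := Fin n × Bool
  T := caterpillar n
  finite := inferInstance
  connected := caterpillar_connected (by omega)
  acyclic := caterpillar_isAcyclic
  subcubic := caterpillar_ncard_neighborSet_le
  δ v := (σ v, true)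
  δ_inj _ _ h := σ.injective (Prod.ext_iff.1 h).1
  δ_leaf v := by rw [caterpillar_neighborSet_leaf, Set.ncard_singleton]
  δ_surj := by
    rintro ⟨i, (_ | _)⟩ h
    · exact absurd h (caterpillar_ncard_neighborSet_spine_ne_one hn i)
    · exact ⟨σ.symm i, by simp⟩

variable {G σ hn}

lemma caterpillarDecomp_side_spine {i j : Fin n} (hij : i.val + 1 = j.val) :
    (caterpillarDecomp G σ hn).side (i, false) (j, false) = {v | σ v ≤ i} :=
  Set.ext fun _ => caterpillar_reachable_deleteEdges_spine hij _

lemma caterpillarDecomp_width_le {k : ℕ} (hk : 1 ≤ k)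
    (h : ∀ i : Fin n, cutmim G {v | σ v ≤ i} {v | σ v ≤ i}ᶜ ≤ k) :
    (caterpillarDecomp G σ hn).width ≤ k := by
  refine BranchDecomp.width_le _ fun ⟨i, c⟩ ⟨j, d⟩ hab => ?_
  have hσ : {v | σ v = i}.Subsingleton := fun v hv w hw => σ.injective (hv.trans hw.symm)
  rcases caterpillar_adj.1 hab with ⟨rfl, rfl, hij | hij⟩ | ⟨rfl, hcd⟩
  · rw [caterpillarDecomp_side_spine hij]
    exact h i
  · have : (caterpillarDecomp G σ hn).side (i, false) (j, false) = {v | σ v ≤ j}ᶜ :=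
      Set.ext fun _ => caterpillar_reachable_deleteEdges_spine' hij _
    rw [this, compl_compl, cutmim_comm]
    exact h j
  · cases c <;> cases d <;> simp only [ne_eq, not_true_eq_false] at hcd
    · have : (caterpillarDecomp G σ hn).side (i, false) (i, true) = {v | σ v = i}ᶜ :=
        Set.ext fun v => (caterpillar_reachable_deleteEdges_leaf' _).trans
          (by simp [caterpillarDecomp])
      rw [this, compl_compl, cutmim_comm]
      exact (cutmim_le_one_of_subsingleton hσ).trans hk
    · have : (caterpillarDecomp G σ hn).side (i, true) (i, false) = {v | σ v = i} :=
        Set.ext fun v => (caterpillar_reachable_deleteEdges_leaf _).trans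
          (by simp [caterpillarDecomp])
      rw [this]
      exact (cutmim_le_one_of_subsingleton hσ).trans hk

lemma cutmim_le_width_caterpillarDecomp {i : Fin n} (hi : i.val + 1 < n) :
    cutmim G {v | σ v ≤ i} {v | σ v ≤ i}ᶜ ≤ (caterpillarDecomp G σ hn).width := by
  rw [← caterpillarDecomp_side_spine (j := ⟨i + 1, hi⟩) rfl]
  exact BranchDecomp.cutmim_le_width _ (Or.inl ⟨rfl, rfl, pathGraph_adj.2 (Or.inl rfl)⟩)

end CaterpillarDecomp

section ForbiddenConfigurations

variable {V : Type*} {G : SimpleGraph V}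

lemma HFree.not_isIndContained {W : Type*} {H : SimpleGraph W} (h : HFree G H) : ¬H ⊴ G := by
  rw [isIndContained_iff_exists_iso_induce]
  exact fun ⟨s, ⟨e⟩⟩ => h ⟨s, ⟨e.symm⟩⟩

lemma HFree.adj_of_sP1P2 (h : HFree G (sP1P2graph 2)) {u w x y : V} (hxy : G.Adj x y)
    (hux : ¬G.Adj u x) (huy : ¬G.Adj u y) (hwx : ¬G.Adj w x) (hwy : ¬G.Adj w y) (huw : u ≠ w) :
    G.Adj u w := by
  by_contra huw'
  have := hxy.ne
  have : u ≠ x := fun h => huy (h ▸ hxy)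
  have : u ≠ y := fun h => hux (h ▸ hxy.symm)
  have : w ≠ x := fun h => hwy (h ▸ hxy)
  have : w ≠ y := fun h => hwx (h ▸ hxy.symm)
  let f : Fin 2 ⊕ Fin 2 → V := Sum.elim ![u, w] ![x, y]
  have hf : f.Injective := by
    rintro (a | a) (b | b) <;> fin_cases a <;> fin_cases b <;> simp [f, *, Ne.symm]
  refine h.not_isIndContained ⟨⟨⟨f, hf⟩, fun {a b} => ?_⟩⟩
  change G.Adj (f a) (f b) ↔ _
  rcases a with a | a <;> rcases b with b | b <;> fin_cases a <;> fin_cases b <;>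
    simp [f, sP1P2graph, *, adj_comm]

lemma HFree.false_of_bowtie (h : HFree G bowtieGraph) {c x y u w : V}
    (hcx : G.Adj c x) (hcy : G.Adj c y) (hcu : G.Adj c u) (hcw : G.Adj c w)
    (hxy : G.Adj x y) (huw : G.Adj u w)
    (hxu : ¬G.Adj x u) (hxw : ¬G.Adj x w) (hyu : ¬G.Adj y u) (hyw : ¬G.Adj y w) : False := by
  have := hcx.ne
  have := hcy.ne
  have := hcu.ne
  have := hcw.ne
  have := hxy.ne
  have := huw.ne
  have : x ≠ u := fun h => hxw (h ▸ huw)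
  have : x ≠ w := fun h => hxu (h ▸ huw.symm)
  have : y ≠ u := fun h => hyw (h ▸ huw)
  have : y ≠ w := fun h => hyu (h ▸ huw.symm)
  let f : Fin 5 → V := ![c, x, y, u, w]
  have hf : f.Injective := by
    intro a b; fin_cases a <;> fin_cases b <;> simp [f, *, Ne.symm]
  refine h.not_isIndContained ⟨⟨⟨f, hf⟩, fun {a b} => ?_⟩⟩
  change G.Adj (f a) (f b) ↔ _
  fin_cases a <;> fin_cases b <;> simp [f, bowtieGraph, *, adj_comm]

end ForbiddenConfigurations

section KboxK

variable {V : Type*} {G : SimpleGraph V} {r : ℕ}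

@[simp] lemma kboxK_adj_inl_inl {i j : Fin r} : (KboxK r).Adj (.inl i) (.inl j) ↔ i ≠ j := by
  simp [KboxK]

@[simp] lemma kboxK_adj_inr_inr {i j : Fin r} : (KboxK r).Adj (.inr i) (.inr j) ↔ i ≠ j := by
  simp [KboxK]

@[simp] lemma kboxK_adj_inl_inr {i j : Fin r} : (KboxK r).Adj (.inl i) (.inr j) ↔ i = j := by
  simp [KboxK, eq_comm]

@[simp] lemma kboxK_adj_inr_inl {i j : Fin r} : (KboxK r).Adj (.inr i) (.inl j) ↔ i = j := by
  simp [KboxK]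

def kboxKSwap : KboxK r ≃g KboxK r where
  __ := Equiv.sumComm (Fin r) (Fin r)
  map_rel_iff' := by rintro (i | i) (j | j) <;> simp

def swapSides (φ : KboxK r ↪g G) : KboxK r ↪g G := φ.comp kboxKSwap.toEmbedding

variable (φ : KboxK r ↪g G)

@[simp] lemma swapSides_inl (i : Fin r) : swapSides φ (.inl i) = φ (.inr i) := rfl

@[simp] lemma swapSides_inr (i : Fin r) : swapSides φ (.inr i) = φ (.inl i) := rfl

@[simp] lemma range_swapSides : Set.range (swapSides φ) = Set.range φ :=
  EquivLike.range_comp φ kboxKSwap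

lemma exists_kboxK_succ_extension {p q : V} (hp : p ∉ Set.range φ) (hq : q ∉ Set.range φ)
    (hpq : G.Adj p q) (hpA : ∀ i, ¬G.Adj p (φ (.inl i))) (hpB : ∀ i, G.Adj p (φ (.inr i)))
    (hqA : ∀ i, G.Adj q (φ (.inl i))) (hqB : ∀ i, ¬G.Adj q (φ (.inr i))) :
    ∃ ψ : KboxK (r + 1) ↪g G, Set.range φ ⊆ Set.range ψ := by
  let f : Fin (r + 1) ⊕ Fin (r + 1) → V :=
    Sum.elim (Fin.lastCases q fun i => φ (.inl i)) (Fin.lastCases p fun i => φ (.inr i))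
  have hp' : ∀ x, φ x ≠ p := fun x h => hp ⟨x, h⟩
  have hq' : ∀ x, φ x ≠ q := fun x h => hq ⟨x, h⟩
  have hf : f.Injective := by
    rintro (i | i) (j | j) <;> induction i using Fin.lastCases <;>
      induction j using Fin.lastCases <;>
      simp [f, hpq.ne, hpq.ne', hp', hq', (hp' _).symm, (hq' _).symm]
  refine ⟨⟨⟨f, hf⟩, fun {x y} => ?_⟩, ?_⟩
  · change G.Adj (f x) (f y) ↔ _
    rcases x with i | i <;> rcases y with j | j <;> induction i using Fin.lastCases <;>
      induction j using Fin.lastCases <;>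
      simp [f, hpq, hpA, hpB, hqA, hqB, adj_comm, Fin.castSucc_ne_last,
        (Fin.castSucc_ne_last _).symm]
  · rintro _ ⟨x, rfl⟩
    exact ⟨x.map Fin.castSucc Fin.castSucc, by rcases x with i | i <;> simp [f]⟩

lemma exists_kboxK_embedding_of_maximal {X : Set V} (hX : Nonempty (G.induce X ≃g KboxK r))
    (hmax : ∀ S : Set V, Disjoint S X → ¬Nonempty (G.induce (X ∪ S) ≃g KboxK (r + 1))) :
    ∃ φ : KboxK r ↪g G, ∀ ψ : KboxK (r + 1) ↪g G, ¬Set.range φ ⊆ Set.range ψ := by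
  obtain ⟨e⟩ := hX
  let φ : KboxK r ↪g G := (Embedding.induce X).comp e.symm.toEmbedding
  have hX : Set.range φ = X := by
    change Set.range (Subtype.val ∘ e.symm) = X
    rw [EquivLike.range_comp, Subtype.range_coe]
  refine ⟨φ, fun ψ hψ => ?_⟩
  refine hmax (Set.range ψ \ X) Set.disjoint_sdiff_left ⟨?_⟩
  rw [Set.union_sdiff_self, ← hX, Set.union_eq_right.2 hψ]
  exact ψ.isoInduceRange.symm

end KboxK

section KboxKStructure

variable {V : Type*} {G : SimpleGraph V} {r : ℕ} (φ : KboxK r ↪g G) {v : V}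

lemma adj_inr_of_not_adj_inl (h1 : HFree G (sP1P2graph 2)) (hv : v ∉ Set.range φ)
    {s t k : Fin r} (hst : s ≠ t) (hs : ¬G.Adj v (φ (.inl s))) (ht : ¬G.Adj v (φ (.inl t)))
    (hks : k ≠ s) (hkt : k ≠ t) : G.Adj v (φ (.inr k)) :=
  h1.adj_of_sP1P2 (by simpa using hst) hs ht (by simpa using hks) (by simpa using hkt)
    fun h => hv ⟨_, h.symm⟩

lemma false_of_adj_two_inl_two_inr (h2 : HFree G bowtieGraph) {s t i j : Fin r}
    (hst : s ≠ t) (hij : i ≠ j) (his : i ≠ s) (hit : i ≠ t) (hjs : j ≠ s) (hjt : j ≠ t)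
    (hs : G.Adj v (φ (.inl s))) (ht : G.Adj v (φ (.inl t)))
    (hi : G.Adj v (φ (.inr i))) (hj : G.Adj v (φ (.inr j))) : False :=
  h2.false_of_bowtie hs ht hi hj (by simpa using hst) (by simpa using hij) (by simpa using his.symm)
    (by simpa using hjs.symm) (by simpa using hit.symm) (by simpa using hjt.symm)

/-- For `i ≠ m, t`, the vertex `v` sees `φ (.inl i)` and `φ (.inr i)`, which gives a bowtie
centred at `φ (.inl i)` with the triangle on `φ (.inl m), φ (.inl t)`. -/
lemma false_of_not_adj_inr_inl_inl (h1 : HFree G (sP1P2graph 2)) (h2 : HFree G bowtieGraph)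
    (hr : 3 ≤ r) (hv : v ∉ Set.range φ) {m t : Fin r} (htm : t ≠ m)
    (hbm : ¬G.Adj v (φ (.inr m))) (ham : ¬G.Adj v (φ (.inl m))) (hat : ¬G.Adj v (φ (.inl t))) :
    False := by
  obtain ⟨i, hi⟩ := Fin.exists_notMem {m, t}
    (by have := (Set.subsingleton_singleton (a := t)).ncard_insert_le_two m; omega)
  simp only [Set.mem_insert_iff, Set.mem_singleton_iff, not_or] at hi
  have hbi := adj_inr_of_not_adj_inl φ h1 hv htm.symm ham hat hi.1 hi.2
  have hai : G.Adj v (φ (.inl i)) := by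
    by_contra hai
    exact hbm (adj_inr_of_not_adj_inl φ h1 hv (Ne.symm hi.2) hat hai htm.symm (Ne.symm hi.1))
  exact h2.false_of_bowtie (c := φ (.inl i)) hai.symm (by simp) (by simpa using hi.1)
    (by simpa using hi.2) hbi (by simpa using htm.symm) ham hat (by simpa using hi.1)
    (by simpa using hi.2)

lemma forall_adj_inr_of_not_adj_inl (h1 : HFree G (sP1P2graph 2)) (h2 : HFree G bowtieGraph)
    (hr : 3 ≤ r) (hv : v ∉ Set.range φ) {s t : Fin r} (hst : s ≠ t)
    (hs : ¬G.Adj v (φ (.inl s))) (ht : ¬G.Adj v (φ (.inl t))) (k : Fin r) :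
    G.Adj v (φ (.inr k)) := by
  by_contra hk
  by_cases hks : k = s
  · exact false_of_not_adj_inr_inl_inl φ h1 h2 hr hv (hks ▸ hst.symm) hk (hks ▸ hs) ht
  by_cases hkt : k = t
  · exact false_of_not_adj_inr_inl_inl φ h1 h2 hr hv (hkt ▸ hst) hk (hkt ▸ ht) hs
  exact hk (adj_inr_of_not_adj_inl φ h1 hv hst hs ht hks hkt)

lemma subsingleton_adj_inl (h2 : HFree G bowtieGraph) (hr : 4 ≤ r)
    (hB : ∀ i, G.Adj v (φ (.inr i))) : {i | G.Adj v (φ (.inl i))}.Subsingleton := by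
  intro s hs t ht
  by_contra hst
  obtain ⟨i, j, hij, hi, hj⟩ := Fin.exists_pair_notMem {s, t}
    (by have := (Set.subsingleton_singleton (a := t)).ncard_insert_le_two s; omega)
  simp only [Set.mem_insert_iff, Set.mem_singleton_iff, not_or] at hi hj
  exact false_of_adj_two_inl_two_inr φ h2 hst hij hi.1 hi.2 hj.1 hj.2 hs ht (hB i) (hB j)


lemma forall_adj_inr_or_forall_adj_inl (h1 : HFree G (sP1P2graph 2)) (h2 : HFree G bowtieGraph)
    (hr : 5 ≤ r) (hv : v ∉ Set.range φ) :
    (∀ i, G.Adj v (φ (.inr i))) ∨ ∀ i, G.Adj v (φ (.inl i)) := by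
  rcases Set.subsingleton_or_nontrivial {i | ¬G.Adj v (φ (.inl i))} with hA | ⟨s, hs, t, ht, hst⟩
  · rcases Set.subsingleton_or_nontrivial {i | ¬G.Adj v (φ (.inr i))} with hB | ⟨s, hs, t, ht, hst⟩
    · exfalso
      obtain ⟨s, t, hst, hs, ht⟩ := Fin.exists_pair_notMem {i | ¬G.Adj v (φ (.inl i))}
        (by have := Set.ncard_le_one_iff_subsingleton.2 hA; omega)
      obtain ⟨i, j, hij, hi, hj⟩ :=
        Fin.exists_pair_notMem (insert s (insert t {i | ¬G.Adj v (φ (.inr i))}))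
        (by
          have := Set.ncard_insert_le s (insert t {i | ¬G.Adj v (φ (.inr i))})
          have := hB.ncard_insert_le_two t
          omega)
      simp only [Set.mem_insert_iff, Set.mem_ofPred_eq, not_or, not_not] at hs ht hi hj
      exact false_of_adj_two_inl_two_inr φ h2 hst hij hi.1 hi.2.1 hj.1 hj.2.1 hs ht hi.2.2 hj.2.2
    · exact Or.inr (forall_adj_inr_of_not_adj_inl (swapSides φ) h1 h2 (by omega)
        (by simpa using hv) hst (by simpa using hs) (by simpa using ht))
  · exact Or.inl (forall_adj_inr_of_not_adj_inl φ h1 h2 (by omega) hv hst hs ht)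

/-- The right copy `B` of `K_r` together with the outside vertices complete to `B`; it and its
complement are the two cliques covering `G`. -/
def rightClique : Set V := {v | ∀ i, v ≠ φ (.inr i) → G.Adj v (φ (.inr i))}

lemma inr_mem_rightClique (i : Fin r) : φ (.inr i) ∈ rightClique φ := fun j hij => by
  simpa using hij

lemma inl_notMem_rightClique (hr : 2 ≤ r) (i : Fin r) : φ (.inl i) ∉ rightClique φ := by
  obtain ⟨j, hj⟩ := Fin.exists_notMem {i} (by rw [Set.ncard_singleton]; omega)
  exact fun h => hj (by simpa [eq_comm] using h j (by simp))

lemma mem_rightClique_iff (hv : v ∉ Set.range φ) : v ∈ rightClique φ ↔ ∀ i, G.Adj v (φ (.inr i)) :=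
  forall_congr' fun _ => ⟨fun h => h fun h' => hv ⟨_, h'.symm⟩, fun h _ => h⟩

lemma compl_rightClique (h1 : HFree G (sP1P2graph 2)) (h2 : HFree G bowtieGraph) (hr : 5 ≤ r) :
    (rightClique φ)ᶜ = rightClique (swapSides φ) := by
  ext v
  by_cases hv : v ∈ Set.range φ
  · obtain ⟨i | i, rfl⟩ := hv
    · exact iff_of_true (inl_notMem_rightClique φ (by omega) i)
        (inr_mem_rightClique (swapSides φ) i)
    · exact iff_of_false (not_not.2 (inr_mem_rightClique φ i))
        (inl_notMem_rightClique (swapSides φ) (by omega) i)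
  rw [Set.mem_compl_iff, mem_rightClique_iff φ hv,
    mem_rightClique_iff (swapSides φ) (by simpa using hv)]
  simp only [swapSides_inr]
  refine ⟨fun hB => (forall_adj_inr_or_forall_adj_inl φ h1 h2 hr hv).resolve_left hB, ?_⟩
  intro hA hB
  obtain ⟨i, j, hij, -, -⟩ := Fin.exists_pair_notMem (∅ : Set (Fin r)) (by simp; omega)
  exact hij (subsingleton_adj_inl φ h2 (by omega) hB (hA i) (hA j))

lemma forall_adj_inl_of_notMem_rightClique (h1 : HFree G (sP1P2graph 2))
    (h2 : HFree G bowtieGraph) (hr : 5 ≤ r) (hv : v ∉ Set.range φ) (hvR : v ∉ rightClique φ) :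
    ∀ i, G.Adj v (φ (.inl i)) :=
  (forall_adj_inr_or_forall_adj_inl φ h1 h2 hr hv).resolve_left
    fun h => hvR ((mem_rightClique_iff φ hv).2 h)

lemma isClique_rightClique (h1 : HFree G (sP1P2graph 2)) (h2 : HFree G bowtieGraph) (hr : 4 ≤ r) :
    G.IsClique (rightClique φ) := by
  intro u hu w hw huw
  by_cases hu' : u ∈ Set.range φ
  · obtain ⟨i | i, rfl⟩ := hu'
    · exact absurd hu (inl_notMem_rightClique φ (by omega) i)
    · exact (hw i (Ne.symm huw)).symm
  by_cases hw' : w ∈ Set.range φ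
  · obtain ⟨i | i, rfl⟩ := hw'
    · exact absurd hw (inl_notMem_rightClique φ (by omega) i)
    · exact hu i huw
  rw [mem_rightClique_iff φ hu'] at hu
  rw [mem_rightClique_iff φ hw'] at hw
  obtain ⟨i, j, hij, hi, hj⟩ := Fin.exists_pair_notMem
    ({i | G.Adj u (φ (.inl i))} ∪ {i | G.Adj w (φ (.inl i))}) (by
      have := Set.ncard_union_le {i | G.Adj u (φ (.inl i))} {i | G.Adj w (φ (.inl i))}
      have := Set.ncard_le_one_iff_subsingleton.2 (subsingleton_adj_inl φ h2 (by omega) hu)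
      have := Set.ncard_le_one_iff_subsingleton.2 (subsingleton_adj_inl φ h2 (by omega) hw)
      omega)
  simp only [Set.mem_union, Set.mem_ofPred_eq, not_or] at hi hj
  exact h1.adj_of_sP1P2 (by simpa using hij) hi.1 hj.1 hi.2 hj.2 huw

lemma isClique_compl_rightClique (h1 : HFree G (sP1P2graph 2)) (h2 : HFree G bowtieGraph)
    (hr : 5 ≤ r) : G.IsClique (rightClique φ)ᶜ := by
  rw [compl_rightClique φ h1 h2 hr]
  exact isClique_rightClique (swapSides φ) h1 h2 (by omega)

end KboxKStructure

section KboxKMaximal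

variable {V : Type*} {G : SimpleGraph V} {r : ℕ} (φ : KboxK r ↪g G) {p q : V}

/-- A bowtie centred at `p`, with triangles `p φ(.inl m) q` and `p φ(.inr i) φ(.inr j)` for two
`i, j ≠ m` that `q` misses. -/
lemma not_adj_of_adj_inl (h2 : HFree G bowtieGraph) (hr : 4 ≤ r)
    (hpB : ∀ i, G.Adj p (φ (.inr i))) (hqA : ∀ i, G.Adj q (φ (.inl i))) {m : Fin r}
    (hpm : G.Adj p (φ (.inl m))) : ¬G.Adj p q := by
  intro hpq
  have hq := subsingleton_adj_inl (swapSides φ) h2 hr (by simpa using hqA)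
  simp only [swapSides_inl] at hq
  obtain ⟨i, j, hij, hi, hj⟩ := Fin.exists_pair_notMem (insert m {i | G.Adj q (φ (.inr i))})
    (by have := hq.ncard_insert_le_two m; omega)
  simp only [Set.mem_insert_iff, Set.mem_ofPred_eq, not_or] at hi hj
  exact h2.false_of_bowtie hpm hpq (hpB i) (hpB j) (hqA m).symm (by simpa using hij)
    (by simpa using Ne.symm hi.1) (by simpa using Ne.symm hj.1) hi.2 hj.2

lemma not_adj_of_forall_adj_inr_of_forall_adj_inl (h2 : HFree G bowtieGraph) (hr : 4 ≤ r)
    (hmax : ∀ ψ : KboxK (r + 1) ↪g G, ¬Set.range φ ⊆ Set.range ψ)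
    (hp : p ∉ Set.range φ) (hq : q ∉ Set.range φ)
    (hpB : ∀ i, G.Adj p (φ (.inr i))) (hqA : ∀ i, G.Adj q (φ (.inl i))) : ¬G.Adj p q := by
  intro hpq
  by_cases hpA : ∃ m, G.Adj p (φ (.inl m))
  · obtain ⟨m, hm⟩ := hpA
    exact not_adj_of_adj_inl φ h2 hr hpB hqA hm hpq
  by_cases hqB : ∃ m, G.Adj q (φ (.inr m))
  · obtain ⟨m, hm⟩ := hqB
    exact not_adj_of_adj_inl (swapSides φ) h2 hr hqA hpB (m := m) hm hpq.symm
  push Not at hpA hqB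
  obtain ⟨ψ, hψ⟩ := exists_kboxK_succ_extension φ hp hq hpq hpA hpB hqA hqB
  exact hmax ψ hψ

end KboxKMaximal

section Key

variable {V : Type*} {G : SimpleGraph V} {r : ℕ} (φ : KboxK r ↪g G) {v : V}

open Classical in
/-- Orders the vertices block by block: `φ (.inl i)`, the vertices outside `φ` in
`rightClique φ` adjacent to it, `φ (.inr i)`, the vertices outside `rightClique φ` adjacent to
it. Outside vertices with no such neighbour have no edge between the two cliques; they get `0`. -/
noncomputable def key (w : V) : ℕ :=
  if h : w ∈ Set.range φ then
    Sum.elim (fun i : Fin r => 4 * (i : ℕ)) (fun i => 4 * (i : ℕ) + 2) h.choose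
  else if h : ∃ i, G.Adj w (φ (.inl i)) ∧ w ∈ rightClique φ then 4 * (h.choose : ℕ) + 1
  else if h : ∃ i, G.Adj w (φ (.inr i)) ∧ w ∉ rightClique φ then 4 * (h.choose : ℕ) + 3
  else 0

lemma key_inl (i : Fin r) : key φ (φ (.inl i)) = 4 * i := by
  have h : φ (.inl i) ∈ Set.range φ := ⟨_, rfl⟩
  rw [key, dif_pos h, φ.injective h.choose_spec]
  rfl

lemma key_inr (i : Fin r) : key φ (φ (.inr i)) = 4 * i + 2 := by
  have h : φ (.inr i) ∈ Set.range φ := ⟨_, rfl⟩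
  rw [key, dif_pos h, φ.injective h.choose_spec]
  rfl

lemma key_of_mem_rightClique (h2 : HFree G bowtieGraph) (hr : 4 ≤ r) (hv : v ∉ Set.range φ)
    (hvR : v ∈ rightClique φ) {i : Fin r} (hi : G.Adj v (φ (.inl i))) : key φ v = 4 * i + 1 := by
  have h : ∃ i, G.Adj v (φ (.inl i)) ∧ v ∈ rightClique φ := ⟨i, hi, hvR⟩
  rw [key, dif_neg hv, dif_pos h, subsingleton_adj_inl φ h2 hr ((mem_rightClique_iff φ hv).1 hvR)
    h.choose_spec.1 hi]

lemma key_of_notMem_rightClique (h1 : HFree G (sP1P2graph 2)) (h2 : HFree G bowtieGraph)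
    (hr : 5 ≤ r) (hv : v ∉ Set.range φ) (hvR : v ∉ rightClique φ) {i : Fin r}
    (hi : G.Adj v (φ (.inr i))) : key φ v = 4 * i + 3 := by
  have h : ∃ i, G.Adj v (φ (.inr i)) ∧ v ∉ rightClique φ := ⟨i, hi, hvR⟩
  have hvA := forall_adj_inl_of_notMem_rightClique φ h1 h2 hr hv hvR
  rw [key, dif_neg hv, dif_neg (fun h => hvR h.choose_spec.2), dif_pos h,
    subsingleton_adj_inl (swapSides φ) h2 (by omega) hvA h.choose_spec.1 hi]

end Key

section CrossEdges

variable {V : Type*} {G : SimpleGraph V} {r : ℕ} (φ : KboxK r ↪g G)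
  {S : Set V} {u w : V}

lemma exists_inr_of_adj_mem_rightClique (h1 : HFree G (sP1P2graph 2))
    (h2 : HFree G bowtieGraph) (hr : 5 ≤ r)
    (hmax : ∀ ψ : KboxK (r + 1) ↪g G, ¬Set.range φ ⊆ Set.range ψ)
    (hS : IsLowerCut (key φ) S) (hu : u ∈ S) (hw : w ∉ S)
    (huR : u ∈ rightClique φ) (hwR : w ∉ rightClique φ) (huw : G.Adj u w) :
    ∃ i : Fin r, u = φ (.inr i) ∧ key φ u / 4 = i ∧ key φ w / 4 = i := by
  by_cases hu' : u ∈ Set.range φ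
  · obtain ⟨i | i, rfl⟩ := hu'
    · exact absurd huR (inl_notMem_rightClique φ (by omega) i)
    refine ⟨i, rfl, by rw [key_inr]; omega, ?_⟩
    by_cases hw' : w ∈ Set.range φ
    · obtain ⟨j | j, rfl⟩ := hw'
      · obtain rfl : i = j := by simpa using huw
        exact absurd (hS _ _ hu (by rw [key_inl, key_inr]; omega)) hw
      · exact absurd (inr_mem_rightClique φ j) hwR
    · rw [key_of_notMem_rightClique φ h1 h2 hr hw' hwR huw.symm]
      omega
  · by_cases hw' : w ∈ Set.range φ
    · obtain ⟨j | j, rfl⟩ := hw'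
      · refine absurd (hS _ _ hu ?_) hw
        rw [key_inl, key_of_mem_rightClique φ h2 (by omega) hu' huR huw]
        omega
      · exact absurd (inr_mem_rightClique φ j) hwR
    · exact absurd huw (not_adj_of_forall_adj_inr_of_forall_adj_inl φ h2 (by omega) hmax hu' hw'
        ((mem_rightClique_iff φ hu').1 huR)
        (forall_adj_inl_of_notMem_rightClique φ h1 h2 hr hw' hwR))

lemma exists_inl_of_adj_notMem_rightClique (h1 : HFree G (sP1P2graph 2))
    (h2 : HFree G bowtieGraph) (hr : 5 ≤ r)
    (hmax : ∀ ψ : KboxK (r + 1) ↪g G, ¬Set.range φ ⊆ Set.range ψ)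
    (hS : IsLowerCut (key φ) S) (hu : u ∈ S) (hw : w ∉ S)
    (huR : u ∉ rightClique φ) (hwR : w ∈ rightClique φ) (huw : G.Adj u w) :
    ∃ i : Fin r, u = φ (.inl i) ∧ key φ u / 4 = i ∧ key φ w / 4 = i := by
  by_cases hu' : u ∈ Set.range φ
  · obtain ⟨i | i, rfl⟩ := hu'
    · refine ⟨i, rfl, by rw [key_inl]; omega, ?_⟩
      by_cases hw' : w ∈ Set.range φ
      · obtain ⟨j | j, rfl⟩ := hw'
        · exact absurd hwR (inl_notMem_rightClique φ (by omega) j)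
        · obtain rfl : i = j := by simpa using huw
          rw [key_inr]
          omega
      · rw [key_of_mem_rightClique φ h2 (by omega) hw' hwR huw.symm]
        omega
    · exact absurd (inr_mem_rightClique φ i) huR
  · by_cases hw' : w ∈ Set.range φ
    · obtain ⟨j | j, rfl⟩ := hw'
      · exact absurd hwR (inl_notMem_rightClique φ (by omega) j)
      · refine absurd (hS _ _ hu ?_) hw
        rw [key_inr, key_of_notMem_rightClique φ h1 h2 hr hu' huR huw]
        omega
    · exact absurd huw.symm (not_adj_of_forall_adj_inr_of_forall_adj_inl φ h2 (by omega) hmax hw'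
        hu' ((mem_rightClique_iff φ hw').1 hwR)
        (forall_adj_inl_of_notMem_rightClique φ h1 h2 hr hu' huR))

lemma cutmim_le_two_of_isLowerCut (h1 : HFree G (sP1P2graph 2))
    (h2 : HFree G bowtieGraph) (hr : 5 ≤ r)
    (hmax : ∀ ψ : KboxK (r + 1) ↪g G, ¬Set.range φ ⊆ Set.range ψ)
    (hS : IsLowerCut (key φ) S) : cutmim G S Sᶜ ≤ 2 := by
  refine cutmim_le fun M hM => hM.card_le_two (isClique_rightClique φ h1 h2 (by omega))
    (isClique_compl_rightClique φ h1 h2 hr) (fun p hp q hq hp₁ hp₂ hq₁ hq₂ => ?_)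
    (fun p hp q hq hp₁ hp₂ hq₁ hq₂ => ?_) <;>
  obtain ⟨hpS, hpS', hpq⟩ := hM.1 p hp <;>
  obtain ⟨hqS, hqS', hqp⟩ := hM.1 q hq
  · exact fst_eq_of_isLowerCut hS hpS hpS' hqS hqS'
      (exists_inr_of_adj_mem_rightClique φ h1 h2 hr hmax hS hpS hpS' hp₁ hp₂ hpq)
      (exists_inr_of_adj_mem_rightClique φ h1 h2 hr hmax hS hqS hqS' hq₁ hq₂ hqp)
  · exact fst_eq_of_isLowerCut hS hpS hpS' hqS hqS'
      (exists_inl_of_adj_notMem_rightClique φ h1 h2 hr hmax hS hpS hpS' hp₁ hp₂ hpq)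
      (exists_inl_of_adj_notMem_rightClique φ h1 h2 hr hmax hS hqS hqS' hq₁ hq₂ hqp)

lemma two_le_cutmim_of_isLowerCut [Finite V] (hr : 2 ≤ r) (hS : IsLowerCut (key φ) S)
    (h₀ : φ (.inr ⟨0, by omega⟩) ∈ S) (h₁ : φ (.inl ⟨1, hr⟩) ∉ S) : 2 ≤ cutmim G S Sᶜ :=
  two_le_cutmim (u₁ := φ (.inl ⟨0, by omega⟩)) (w₂ := φ (.inr ⟨1, hr⟩))
    (hS _ _ h₀ (by simp [key_inl, key_inr])) h₀ h₁
    (fun h => h₁ (hS _ _ h (by simp [key_inl, key_inr]))) (by simp) (by simp) (by simp) (by simp)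
    (by simp)

end CrossEdges

/-- Let `G` be a `(2P₁ + P₂, ⋈)`-free graph and let `X ⊆ V(G)` induce
a `K_r ⊟ K_r` with `r ≥ 5`, where `X` is maximal in the sense that no `X ∪ S` with
`S ⊆ V(G) ∖ X` induces a `K_{r'} ⊟ K_{r'}` with `r' > r`.  Then `G` has a branch
decomposition of mim-width exactly `2`; in particular `mimw(G) ≤ 2`. -/
theorem twoP1P2_bowtie_free_KboxK_mimw_two {V : Type*} [Finite V] (G : SimpleGraph V)
    (h1 : HFree G (sP1P2graph 2)) (h2 : HFree G bowtieGraph)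
    (r : ℕ) (hr : 5 ≤ r) (X : Set V) (hX : Nonempty (G.induce X ≃g KboxK r))
    (hmax : ∀ r' : ℕ, r < r' → ∀ S : Set V, Disjoint S X →
      ¬ Nonempty (G.induce (X ∪ S) ≃g KboxK r')) :
    (∃ B : BranchDecomp G, B.width = 2) ∧ mimw G ≤ 2 := by
  obtain ⟨φ, hφ⟩ := exists_kboxK_embedding_of_maximal hX (hmax (r + 1) (by omega))
  have := Fintype.ofFinite V
  obtain ⟨σ, hσ⟩ := exists_equivFin_lt_of_lt (key φ)
  have hS : ∀ i, IsLowerCut (key φ) {v | σ v ≤ i} := fun i v w hv hw => (hσ w v hw).le.trans hv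
  have hb₀ : σ (φ (.inr ⟨0, by omega⟩)) < σ (φ (.inl ⟨1, by omega⟩)) :=
    hσ _ _ (by simp [key_inl, key_inr])
  have hb₀' : (σ (φ (.inr ⟨0, by omega⟩)) : ℕ) + 1 < Fintype.card V :=
    (Nat.succ_le_of_lt (Fin.lt_def.1 hb₀)).trans_lt (σ _).isLt
  have hB : (caterpillarDecomp G σ (by omega)).width = 2 :=
    le_antisymm (caterpillarDecomp_width_le one_le_two fun i =>
        cutmim_le_two_of_isLowerCut φ h1 h2 hr hφ (hS i))
      ((two_le_cutmim_of_isLowerCut φ (by omega) (hS _) (Set.mem_ofPred.2 le_rfl)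
        (not_le.2 hb₀)).trans (cutmim_le_width_caterpillarDecomp hb₀'))
  exact ⟨⟨_, hB⟩, Nat.sInf_le ⟨_, hB⟩⟩
end

section
/- For every graph G = (V, E), the graph G' is P_8-free, (P_3+P_6)-free, and S_{1,1,5}-free, where G' is defined as follows: its vertices are X = {x_v : v ∈ V}, Y = {y_v : v ∈ V}, and for each edge e ∈ E four new vertices q_e, t_e, q'_e, t'_e; its edges are all pairs x_u y_w for u, w ∈ V (a complete bipartite graph between X and Y), together with, for each edge e ∈ E with endpoints u and v, the edges x_u q_e, q_e t_e, t_e y_v, x_v q'_e, q'_e t'_e, t'_e y_u (i.e. paths x_u q_e t_e y_v and x_v q'_e t'_e y_u). -/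
open SimpleGraph

namespace BCMaux
variable {V : Type*} {G : SimpleGraph V}

abbrev EP (G : SimpleGraph V) := {p : V × V // G.Adj p.1 p.2}
abbrev W (G : SimpleGraph V) := V ⊕ V ⊕ (EP G × Fin 2)

def R (G : SimpleGraph V) : W G → W G → Prop
  | Sum.inl _, Sum.inr (Sum.inl _) => True
  | Sum.inr (Sum.inl _), Sum.inl _ => True
  | Sum.inl u, Sum.inr (Sum.inr (p, i)) => i = 0 ∧ p.1.1 = u
  | Sum.inr (Sum.inr (p, i)), Sum.inl u => i = 0 ∧ p.1.1 = u
  | Sum.inr (Sum.inl w), Sum.inr (Sum.inr (p, i)) => i = 1 ∧ p.1.2 = w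
  | Sum.inr (Sum.inr (p, i)), Sum.inr (Sum.inl w) => i = 1 ∧ p.1.2 = w
  | Sum.inr (Sum.inr (p, i)), Sum.inr (Sum.inr (q, j)) => p = q ∧ i ≠ j
  | _, _ => False

lemma adj_iff (a b : W G) : (BCMgraph G).Adj a b ↔ R G a b := by
  rw [BCMgraph, fromRel_adj]
  constructor
  · rintro ⟨hne, (⟨u,w,rfl,rfl⟩|⟨p,rfl,rfl⟩|⟨p,rfl,rfl⟩|⟨p,rfl,rfl⟩)
      |(⟨u,w,rfl,rfl⟩|⟨p,rfl,rfl⟩|⟨p,rfl,rfl⟩|⟨p,rfl,rfl⟩)⟩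
    · exact trivial
    · exact ⟨rfl, rfl⟩
    · exact ⟨rfl, by decide⟩
    · exact ⟨rfl, rfl⟩
    · exact trivial
    · exact ⟨rfl, rfl⟩
    · exact ⟨rfl, by decide⟩
    · exact ⟨rfl, rfl⟩
  · intro h
    rcases a with u | u | ⟨p, i⟩ <;> rcases b with w | w | ⟨q, j⟩
    · exact absurd h (by simp [R])
    · exact ⟨by simp, Or.inl (Or.inl ⟨u, w, rfl, rfl⟩)⟩
    · obtain ⟨rfl, rfl⟩ := h
      exact ⟨by simp, Or.inl (Or.inr (Or.inl ⟨q, rfl, rfl⟩))⟩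
    · exact ⟨by simp, Or.inr (Or.inl ⟨w, u, rfl, rfl⟩)⟩
    · exact absurd h (by simp [R])
    · obtain ⟨rfl, rfl⟩ := h
      exact ⟨by simp, Or.inr (Or.inr (Or.inr (Or.inr ⟨q, rfl, rfl⟩)))⟩
    · obtain ⟨rfl, rfl⟩ := h
      exact ⟨by simp, Or.inr (Or.inr (Or.inl ⟨p, rfl, rfl⟩))⟩
    · obtain ⟨rfl, rfl⟩ := h
      exact ⟨by simp, Or.inl (Or.inr (Or.inr (Or.inr ⟨p, rfl, rfl⟩)))⟩
    · obtain ⟨rfl, hij⟩ := h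
      refine ⟨by simp [hij], ?_⟩
      rcases (by omega : i = 0 ∨ i = 1) with rfl | rfl <;>
        rcases (by omega : j = 0 ∨ j = 1) with rfl | rfl
      · exact absurd rfl hij
      · exact Or.inl (Or.inr (Or.inr (Or.inl ⟨p, rfl, rfl⟩)))
      · exact Or.inr (Or.inr (Or.inr (Or.inl ⟨p, rfl, rfl⟩)))
      · exact absurd rfl hij

def isX : W G → Prop := fun a => ∃ u, a = Sum.inl u
def isY : W G → Prop := fun a => ∃ u, a = Sum.inr (Sum.inl u)
def isE : W G → Prop := fun a => ∃ c : EP G × Fin 2, a = Sum.inr (Sum.inr c)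

lemma triage (w : W G) : isE w ∨ isX w ∨ isY w := by
  rcases w with u | u | c
  · exact Or.inr (Or.inl ⟨u, rfl⟩)
  · exact Or.inr (Or.inr ⟨u, rfl⟩)
  · exact Or.inl ⟨c, rfl⟩

lemma adj_xy (u w : V) : (BCMgraph G).Adj (Sum.inl u) (Sum.inr (Sum.inl w)) :=
  (adj_iff _ _).mpr trivial

lemma nbr_x {u : V} {b : W G} (h : (BCMgraph G).Adj (Sum.inl u) b) :
    isY b ∨ (∃ p : EP G, p.1.1 = u ∧ b = Sum.inr (Sum.inr (p, 0))) := by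
  rw [adj_iff] at h
  rcases b with w | w | ⟨q, j⟩
  · exact absurd h (by simp [R])
  · exact Or.inl ⟨w, rfl⟩
  · obtain ⟨rfl, h2⟩ := h
    exact Or.inr ⟨q, h2, rfl⟩

lemma nbr_y {u : V} {b : W G} (h : (BCMgraph G).Adj (Sum.inr (Sum.inl u)) b) :
    isX b ∨ (∃ p : EP G, p.1.2 = u ∧ b = Sum.inr (Sum.inr (p, 1))) := by
  rw [adj_iff] at h
  rcases b with w | w | ⟨q, j⟩
  · exact Or.inl ⟨w, rfl⟩
  · exact absurd h (by simp [R])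
  · obtain ⟨rfl, h2⟩ := h
    exact Or.inr ⟨q, h2, rfl⟩

lemma nbr_q {p : EP G} {b : W G} (h : (BCMgraph G).Adj (Sum.inr (Sum.inr (p, 0))) b) :
    b = Sum.inl p.1.1 ∨ b = Sum.inr (Sum.inr (p, 1)) := by
  rw [adj_iff] at h
  rcases b with w | w | ⟨q, j⟩
  · obtain ⟨-, h2⟩ := h
    exact Or.inl (by rw [h2])
  · obtain ⟨h1, -⟩ := h
    exact absurd h1 (by decide)
  · obtain ⟨rfl, h2⟩ := h
    have : j = 1 := by omega
    exact Or.inr (by rw [this])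

lemma nbr_t {p : EP G} {b : W G} (h : (BCMgraph G).Adj (Sum.inr (Sum.inr (p, 1))) b) :
    b = Sum.inr (Sum.inr (p, 0)) ∨ b = Sum.inr (Sum.inl p.1.2) := by
  rw [adj_iff] at h
  rcases b with w | w | ⟨q, j⟩
  · obtain ⟨h1, -⟩ := h
    exact absurd h1 (by decide)
  · obtain ⟨-, h2⟩ := h
    exact Or.inr (by rw [h2])
  · obtain ⟨rfl, h2⟩ := h
    have : j = 0 := by omega
    exact Or.inl (by rw [this])

lemma consecE {a c : W G} {p : EP G} {i : Fin 2}
    (hab : (BCMgraph G).Adj a (Sum.inr (Sum.inr (p, i))))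
    (hbc : (BCMgraph G).Adj (Sum.inr (Sum.inr (p, i))) c)
    (ha : isE a) (hc : isE c) : a = c := by
  obtain ⟨⟨q, j⟩, rfl⟩ := ha
  obtain ⟨⟨q', j'⟩, rfl⟩ := hc
  rw [adj_iff] at hab hbc
  obtain ⟨rfl, hj⟩ := hab
  obtain ⟨rfl, hj'⟩ := hbc
  have : j = j' := by omega
  rw [this]

def pswap (p : EP G) : EP G := ⟨(p.1.2, p.1.1), p.2.symm⟩

def σ : W G → W G
  | Sum.inl u => Sum.inr (Sum.inl u)
  | Sum.inr (Sum.inl u) => Sum.inl u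
  | Sum.inr (Sum.inr (p, i)) => Sum.inr (Sum.inr (pswap p, 1 - i))

lemma σ_invol (a : W G) : σ (σ a) = a := by
  rcases a with u | u | ⟨⟨⟨x, y⟩, hp⟩, i⟩
  · rfl
  · rfl
  · show Sum.inr (Sum.inr (pswap (pswap ⟨(x, y), hp⟩), 1 - (1 - i))) = _
    have h2 : (1 : Fin 2) - (1 - i) = i := by omega
    rw [h2]
    rfl

lemma σ_inj : Function.Injective (σ (G := G)) :=
  Function.LeftInverse.injective σ_invol

lemma σ_R {a b : W G} (h : R G a b) : R G (σ a) (σ b) := by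
  rcases a with u | u | ⟨p, i⟩ <;> rcases b with w | w | ⟨q, j⟩
  · exact absurd h (by simp [R])
  · exact trivial
  · obtain ⟨rfl, rfl⟩ := h
    exact ⟨by decide, rfl⟩
  · exact trivial
  · exact absurd h (by simp [R])
  · obtain ⟨rfl, rfl⟩ := h
    exact ⟨by decide, rfl⟩
  · obtain ⟨rfl, rfl⟩ := h
    exact ⟨by decide, rfl⟩
  · obtain ⟨rfl, rfl⟩ := h
    exact ⟨by decide, rfl⟩
  · obtain ⟨rfl, hij⟩ := h
    exact ⟨rfl, by omega⟩

lemma σ_adj {a b : W G} : (BCMgraph G).Adj (σ a) (σ b) ↔ (BCMgraph G).Adj a b := by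
  constructor
  · intro h
    have := σ_R ((adj_iff _ _).mp h)
    rw [σ_invol, σ_invol] at this
    exact (adj_iff _ _).mpr this
  · intro h
    exact (adj_iff _ _).mpr (σ_R ((adj_iff _ _).mp h))

lemma σ_isX {w : W G} : isX (σ w) ↔ isY w := by
  rcases w with u | u | ⟨p, i⟩ <;> simp [σ, isX, isY]

lemma σ_isY {w : W G} : isY (σ w) ↔ isX w := by
  rcases w with u | u | ⟨p, i⟩ <;> simp [σ, isX, isY]

section path

variable {n : ℕ} {f : ℕ → W G}

lemma exists_xy (hinj : ∀ i j, i < n → j < n → f i = f j → i = j)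
    (hadj : ∀ i j, i < n → j < n →
      ((BCMgraph G).Adj (f i) (f j) ↔ (i + 1 = j ∨ j + 1 = i)))
    {k : ℕ} (hk : k + 3 ≤ n) :
    ∃ a, k ≤ a ∧ a < k + 3 ∧ (isX (f a) ∨ isY (f a)) := by
  by_contra hcon
  push_neg at hcon
  have hE : ∀ a, k ≤ a → a < k + 3 → isE (f a) := by
    intro a h1 h2
    rcases triage (f a) with h | h | h
    · exact h
    · exact absurd h (hcon a h1 h2).1
    · exact absurd h (hcon a h1 h2).2
  obtain ⟨⟨p, i⟩, hb⟩ := hE (k + 1) (by omega) (by omega)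
  have hab : (BCMgraph G).Adj (f k) (Sum.inr (Sum.inr (p, i))) := by
    rw [← hb]
    exact (hadj k (k+1) (by omega) (by omega)).mpr (Or.inl rfl)
  have hbc : (BCMgraph G).Adj (Sum.inr (Sum.inr (p, i))) (f (k + 2)) := by
    rw [← hb]
    exact (hadj (k+1) (k+2) (by omega) (by omega)).mpr (Or.inl rfl)
  have := consecE hab hbc (hE k (by omega) (by omega)) (hE (k+2) (by omega) (by omega))
  have := hinj k (k+2) (by omega) (by omega) this
  omega

lemma chainX (hinj : ∀ i j, i < n → j < n → f i = f j → i = j)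
    (hadj : ∀ i j, i < n → j < n →
      ((BCMgraph G).Adj (f i) (f j) ↔ (i + 1 = j ∨ j + 1 = i)))
    {u : V} {k : ℕ} (hk : k + 3 < n) (hx : f k = Sum.inl u)
    (hnotY : ¬ isY (f (k + 1))) : isY (f (k + 3)) := by
  have h1 : (BCMgraph G).Adj (Sum.inl u) (f (k + 1)) := by
    rw [← hx]
    exact (hadj k (k+1) (by omega) (by omega)).mpr (Or.inl rfl)
  rcases nbr_x h1 with h | ⟨p, hp1, hq⟩
  · exact absurd h hnotY
  have h2 : (BCMgraph G).Adj (Sum.inr (Sum.inr (p, 0))) (f (k + 2)) := by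
    rw [← hq]
    exact (hadj (k+1) (k+2) (by omega) (by omega)).mpr (Or.inl rfl)
  rcases nbr_q h2 with h | h
  · exfalso
    have : f (k + 2) = f k := by rw [h, hx, hp1]
    have := hinj (k+2) k (by omega) (by omega) this
    omega
  have h3 : (BCMgraph G).Adj (Sum.inr (Sum.inr (p, 1))) (f (k + 3)) := by
    rw [← h]
    exact (hadj (k+2) (k+3) (by omega) (by omega)).mpr (Or.inl rfl)
  rcases nbr_t h3 with h' | h'
  · exfalso
    have : f (k + 3) = f (k + 1) := by rw [h', hq]
    have := hinj (k+3) (k+1) (by omega) (by omega) this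
    omega
  · exact ⟨p.1.2, h'⟩

end path

section main
variable {f : ℕ → W G}

lemma p8X (hinj : ∀ i j, i < 8 → j < 8 → f i = f j → i = j)
    (hadj : ∀ i j, i < 8 → j < 8 →
      ((BCMgraph G).Adj (f i) (f j) ↔ (i + 1 = j ∨ j + 1 = i)))
    {a c : ℕ} (ha : a < 3) (hc5 : 5 ≤ c) (hc : c < 8)
    (hXa : isX (f a)) (hXc : isX (f c)) : False := by
  obtain ⟨u, hu⟩ := hXa
  obtain ⟨u', hu'⟩ := hXc
  have hnotY : ¬ isY (f (a + 1)) := by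
    rintro ⟨w, hw⟩
    have h : (BCMgraph G).Adj (f c) (f (a + 1)) := by
      rw [hu', hw]; exact adj_xy u' w
    have := (hadj c (a + 1) (by omega) (by omega)).mp h
    omega
  obtain ⟨w, hw⟩ := chainX hinj hadj (k := a) (by omega) hu hnotY
  have h : (BCMgraph G).Adj (f a) (f (a + 3)) := by
    rw [hu, hw]; exact adj_xy u w
  have := (hadj a (a + 3) (by omega) (by omega)).mp h
  omega

lemma p8 (hinj : ∀ i j, i < 8 → j < 8 → f i = f j → i = j)
    (hadj : ∀ i j, i < 8 → j < 8 →
      ((BCMgraph G).Adj (f i) (f j) ↔ (i + 1 = j ∨ j + 1 = i))) : False := by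
  obtain ⟨a, -, ha, hXYa⟩ := exists_xy hinj hadj (k := 0) (by omega)
  obtain ⟨c, hc5, hc, hXYc⟩ := exists_xy hinj hadj (k := 5) (by omega)
  rcases hXYa with hXa | hYa <;> rcases hXYc with hXc | hYc
  · exact p8X hinj hadj (by omega) (by omega) (by omega) hXa hXc
  · obtain ⟨u, hu⟩ := hXa
    obtain ⟨w, hw⟩ := hYc
    have h : (BCMgraph G).Adj (f a) (f c) := by rw [hu, hw]; exact adj_xy u w
    have := (hadj a c (by omega) (by omega)).mp h
    omega
  · obtain ⟨u, hu⟩ := hXc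
    obtain ⟨w, hw⟩ := hYa
    have h : (BCMgraph G).Adj (f c) (f a) := by rw [hu, hw]; exact adj_xy u w
    have := (hadj c a (by omega) (by omega)).mp h
    omega
  · exact p8X (f := σ ∘ f) (fun i j hi hj h => hinj i j hi hj (σ_inj h))
      (fun i j hi hj => σ_adj.trans (hadj i j hi hj)) (by omega) (by omega) (by omega)
      (σ_isX.mpr hYa) (σ_isX.mpr hYc)

lemma p6X (hinj : ∀ i j, i < 6 → j < 6 → f i = f j → i = j)
    (hadj : ∀ i j, i < 6 → j < 6 →
      ((BCMgraph G).Adj (f i) (f j) ↔ (i + 1 = j ∨ j + 1 = i))) :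
    ∃ i, i < 6 ∧ isX (f i) := by
  obtain ⟨a, -, ha, hXY⟩ := exists_xy hinj hadj (k := 0) (by omega)
  rcases hXY with hX | hY
  · exact ⟨a, by omega, hX⟩
  by_cases hX1 : isX (f (a + 1))
  · exact ⟨a + 1, by omega, hX1⟩
  obtain ⟨u, hu⟩ := hY
  have hch := chainX (f := σ ∘ f) (fun i j hi hj h => hinj i j hi hj (σ_inj h))
      (fun i j hi hj => σ_adj.trans (hadj i j hi hj)) (k := a) (by omega)
      (u := u) (by show σ (f a) = _; rw [hu]; rfl)
      (fun h => hX1 (σ_isY.mp h))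
  exact ⟨a + 3, by omega, σ_isY.mp hch⟩

lemma p6Y (hinj : ∀ i j, i < 6 → j < 6 → f i = f j → i = j)
    (hadj : ∀ i j, i < 6 → j < 6 →
      ((BCMgraph G).Adj (f i) (f j) ↔ (i + 1 = j ∨ j + 1 = i))) :
    ∃ i, i < 6 ∧ isY (f i) := by
  obtain ⟨i, hi, hX⟩ := p6X (f := σ ∘ f) (fun i j hi hj h => hinj i j hi hj (σ_inj h))
      (fun i j hi hj => σ_adj.trans (hadj i j hi hj))
  exact ⟨i, hi, σ_isX.mp hX⟩

end main

instance : DecidableRel S115graph.Adj := fun a b =>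
  decidable_of_iff _ (SimpleGraph.fromRel_adj _ a b).symm

def idx : ℕ → Fin 8
  | 0 => 0
  | 1 => 3
  | 2 => 4
  | 3 => 5
  | 4 => 6
  | _ => 7

lemma s115core (f : Fin 8 → W G) (hinj : Function.Injective f)
    (hadj : ∀ i j, (BCMgraph G).Adj (f i) (f j) ↔ S115graph.Adj i j)
    {c : V} (h0 : f 0 = Sum.inl c) : False := by
  set g : ℕ → W G := fun m => f (idx m) with hg
  have hinj6 : ∀ i j, i < 6 → j < 6 → g i = g j → i = j := by
    intro i j hi hj h
    have h' := hinj h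
    interval_cases i <;> interval_cases j <;> first | rfl | exact absurd h' (by decide)
  have hadj6 : ∀ i j, i < 6 → j < 6 →
      ((BCMgraph G).Adj (g i) (g j) ↔ (i + 1 = j ∨ j + 1 = i)) := by
    intro i j hi hj
    rw [hg]
    simp only []
    rw [hadj (idx i) (idx j)]
    interval_cases i <;> interval_cases j <;> simp [idx] <;> decide
  obtain ⟨j, hj6, w, hw⟩ := p6Y hinj6 hadj6
  have hne : idx j ≠ 0 := by
    intro h
    rw [hg] at hw
    simp only [] at hw
    rw [h, h0] at hw
    simp at hw
  have hadj0 : S115graph.Adj 0 (idx j) := by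
    rw [← hadj]
    rw [h0]
    rw [hg] at hw
    simp only [] at hw
    rw [hw]
    exact adj_xy c w
  have h3 : idx j = 3 := by
    interval_cases j <;> revert hadj0 hne <;> decide
  have hf3 : f 3 = Sum.inr (Sum.inl w) := by
    rw [hg] at hw
    simp only [] at hw
    rw [h3] at hw
    exact hw
  have ha34 : (BCMgraph G).Adj (Sum.inr (Sum.inl w)) (f 4) := by
    rw [← hf3]
    exact (hadj 3 4).mpr (by decide)
  rcases nbr_y ha34 with ⟨u, hu⟩ | ⟨p, hp2, ht⟩
  · -- f 4 = x_u
    have ha45 : (BCMgraph G).Adj (Sum.inl u) (f 5) := by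
      rw [← hu]; exact (hadj 4 5).mpr (by decide)
    rcases nbr_x ha45 with ⟨w', hw'⟩ | ⟨p, hp1, hq⟩
    · have : (BCMgraph G).Adj (f 0) (f 5) := by rw [h0, hw']; exact adj_xy c w'
      exact absurd ((hadj 0 5).mp this) (by decide)
    · have ha56 : (BCMgraph G).Adj (Sum.inr (Sum.inr (p, 0))) (f 6) := by
        rw [← hq]; exact (hadj 5 6).mpr (by decide)
      rcases nbr_q ha56 with h6 | h6
      · have : f 6 = f 4 := by rw [h6, hp1, hu]
        exact absurd (hinj this) (by decide)
      · have ha67 : (BCMgraph G).Adj (Sum.inr (Sum.inr (p, 1))) (f 7) := by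
          rw [← h6]; exact (hadj 6 7).mpr (by decide)
        rcases nbr_t ha67 with h7 | h7
        · have : f 7 = f 5 := by rw [h7, hq]
          exact absurd (hinj this) (by decide)
        · have : (BCMgraph G).Adj (f 0) (f 7) := by
            rw [h0, h7]; exact adj_xy c p.1.2
          exact absurd ((hadj 0 7).mp this) (by decide)
  · -- f 4 = t_p with p.1.2 = w
    have ha45 : (BCMgraph G).Adj (Sum.inr (Sum.inr (p, 1))) (f 5) := by
      rw [← ht]; exact (hadj 4 5).mpr (by decide)
    rcases nbr_t ha45 with h5 | h5
    · have ha56 : (BCMgraph G).Adj (Sum.inr (Sum.inr (p, 0))) (f 6) := by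
        rw [← h5]; exact (hadj 5 6).mpr (by decide)
      rcases nbr_q ha56 with h6 | h6
      · have : (BCMgraph G).Adj (f 6) (f 3) := by
          rw [h6, hf3]; exact adj_xy p.1.1 w
        exact absurd ((hadj 6 3).mp this) (by decide)
      · have : f 6 = f 4 := by rw [h6, ht]
        exact absurd (hinj this) (by decide)
    · have : f 5 = f 3 := by rw [h5, hp2, hf3]
      exact absurd (hinj this) (by decide)

lemma s115 (f : Fin 8 → W G) (hinj : Function.Injective f)
    (hadj : ∀ i j, (BCMgraph G).Adj (f i) (f j) ↔ S115graph.Adj i j) : False := by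
  have h1 : (BCMgraph G).Adj (f 0) (f 1) := (hadj 0 1).mpr (by decide)
  have h2 : (BCMgraph G).Adj (f 0) (f 2) := (hadj 0 2).mpr (by decide)
  have h3 : (BCMgraph G).Adj (f 0) (f 3) := (hadj 0 3).mpr (by decide)
  rcases triage (f 0) with ⟨⟨p, i⟩, h0⟩ | ⟨c, h0⟩ | ⟨c, h0⟩
  · rw [h0] at h1 h2 h3
    rcases (by omega : i = 0 ∨ i = 1) with rfl | rfl
    · rcases nbr_q h1 with e1 | e1 <;> rcases nbr_q h2 with e2 | e2 <;>
        rcases nbr_q h3 with e3 | e3 <;>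
      first
        | exact absurd (hinj (e1.trans e2.symm)) (by decide)
        | exact absurd (hinj (e1.trans e3.symm)) (by decide)
        | exact absurd (hinj (e2.trans e3.symm)) (by decide)
    · rcases nbr_t h1 with e1 | e1 <;> rcases nbr_t h2 with e2 | e2 <;>
        rcases nbr_t h3 with e3 | e3 <;>
      first
        | exact absurd (hinj (e1.trans e2.symm)) (by decide)
        | exact absurd (hinj (e1.trans e3.symm)) (by decide)
        | exact absurd (hinj (e2.trans e3.symm)) (by decide)
  · exact s115core f hinj hadj h0
  · exact s115core (σ ∘ f) (σ_inj.comp hinj)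
      (fun i j => σ_adj.trans (hadj i j)) (c := c) (by show σ (f 0) = _; rw [h0]; rfl)

lemma sumGraph_inr_inr {α β : Type*} (G : SimpleGraph α) (H : SimpleGraph β) (i j : β) :
    (sumGraph G H).Adj (Sum.inr i) (Sum.inr j) ↔ H.Adj i j := by
  rw [sumGraph, fromRel_adj]
  constructor
  · rintro ⟨-, (⟨x, y, hx, hy, h⟩ | ⟨x, y, hx, hy, h⟩) |
      (⟨x, y, hx, hy, h⟩ | ⟨x, y, hx, hy, h⟩)⟩ <;> simp_all
    · exact h.symm
  · intro h
    exact ⟨by simp [h.ne], Or.inl (Or.inr ⟨i, j, rfl, rfl, h⟩)⟩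

lemma sumGraph_inl_inl {α β : Type*} (G : SimpleGraph α) (H : SimpleGraph β) (i j : α) :
    (sumGraph G H).Adj (Sum.inl i) (Sum.inl j) ↔ G.Adj i j := by
  rw [sumGraph, fromRel_adj]
  constructor
  · rintro ⟨-, (⟨x, y, hx, hy, h⟩ | ⟨x, y, hx, hy, h⟩) |
      (⟨x, y, hx, hy, h⟩ | ⟨x, y, hx, hy, h⟩)⟩ <;> simp_all
    · exact h.symm
  · intro h
    exact ⟨by simp [h.ne], Or.inl (Or.inl ⟨i, j, rfl, rfl, h⟩)⟩

lemma sumGraph_not_lr {α β : Type*} (G : SimpleGraph α) (H : SimpleGraph β) (i : α) (j : β) :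
    ¬ (sumGraph G H).Adj (Sum.inl i) (Sum.inr j) := by
  rw [sumGraph, fromRel_adj]
  rintro ⟨-, (⟨x, y, hx, hy, h⟩ | ⟨x, y, hx, hy, h⟩) |
    (⟨x, y, hx, hy, h⟩ | ⟨x, y, hx, hy, h⟩)⟩ <;> simp_all

end BCMaux


open BCMaux

/-- For every graph `G`, the graph `G'` of Brault-Baron, Capelli and
Mengel (complete bipartite between `X = {x_v}` and `Y = {y_v}`, plus a path
`x_u - q_e - t_e - y_v` and a path `x_v - q'_e - t'_e - y_u` for every edge `e = uv`
of `G`) is `P₈`-free, `(P₃ + P₆)`-free and `S_{1,1,5}`-free. -/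
theorem BCMgraph_free {V : Type*} [Finite V] (G : SimpleGraph V) :
    HFree (BCMgraph G) (SimpleGraph.pathGraph 8) ∧
    HFree (BCMgraph G) (sumGraph (SimpleGraph.pathGraph 3) (SimpleGraph.pathGraph 6)) ∧
    HFree (BCMgraph G) S115graph := by
  refine ⟨?_, ?_, ?_⟩
  · rintro ⟨S, ⟨e⟩⟩
    set f : ℕ → W G := fun m => ↑(e.symm ⟨m % 8, Nat.mod_lt _ (by norm_num)⟩) with hf
    have base : ∀ x y : Fin 8, (BCMgraph G).Adj ((e.symm x : S) : W G)
        ((e.symm y : S) : W G) ↔ (SimpleGraph.pathGraph 8).Adj x y :=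
      fun x y => e.symm.map_adj_iff
    have hinj : ∀ i j, i < 8 → j < 8 → f i = f j → i = j := by
      intro i j hi hj h
      have h' := e.symm.injective (Subtype.coe_injective h)
      have : i % 8 = j % 8 := Fin.mk.inj_iff.mp h'
      omega
    have hadj : ∀ i j, i < 8 → j < 8 →
        ((BCMgraph G).Adj (f i) (f j) ↔ (i + 1 = j ∨ j + 1 = i)) := by
      intro i j hi hj
      rw [hf]
      simp only []
      rw [base, SimpleGraph.pathGraph_adj]
      show (i % 8 + 1 = j % 8 ∨ j % 8 + 1 = i % 8) ↔ _
      omega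
    exact p8 hinj hadj
  · rintro ⟨S, ⟨e⟩⟩
    set f : ℕ → W G := fun m =>
      ↑(e.symm (Sum.inr ⟨m % 6, Nat.mod_lt _ (by norm_num)⟩)) with hf
    have base : ∀ x y, (BCMgraph G).Adj ((e.symm x : S) : W G)
        ((e.symm y : S) : W G) ↔
        (sumGraph (SimpleGraph.pathGraph 3) (SimpleGraph.pathGraph 6)).Adj x y :=
      fun x y => e.symm.map_adj_iff
    have hinj : ∀ i j, i < 6 → j < 6 → f i = f j → i = j := by
      intro i j hi hj h
      have h' := e.symm.injective (Subtype.coe_injective h)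
      have : i % 6 = j % 6 := Fin.mk.inj_iff.mp (Sum.inr.inj h')
      omega
    have hadj : ∀ i j, i < 6 → j < 6 →
        ((BCMgraph G).Adj (f i) (f j) ↔ (i + 1 = j ∨ j + 1 = i)) := by
      intro i j hi hj
      rw [hf]
      simp only []
      rw [base, sumGraph_inr_inr, SimpleGraph.pathGraph_adj]
      show (i % 6 + 1 = j % 6 ∨ j % 6 + 1 = i % 6) ↔ _
      omega
    obtain ⟨ix, hix, u, hu⟩ := p6X hinj hadj
    obtain ⟨iy, hiy, w, hw⟩ := p6Y hinj hadj
    set k : Fin 3 → W G := fun m => ↑(e.symm (Sum.inl m)) with hk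
    have hanti : ∀ (m : Fin 3) (i : ℕ), i < 6 → ¬ (BCMgraph G).Adj (k m) (f i) := by
      intro m i hi hA
      rw [hk, hf] at hA
      simp only [] at hA
      rw [base] at hA
      exact sumGraph_not_lr _ _ _ _ hA
    have hadjk : ∀ m m' : Fin 3, (SimpleGraph.pathGraph 3).Adj m m' →
        (BCMgraph G).Adj (k m) (k m') := by
      intro m m' h
      rw [hk]
      simp only []
      rw [base, sumGraph_inl_inl]
      exact h
    have hkinj : ∀ m m' : Fin 3, k m = k m' → m = m' := by
      intro m m' h
      exact Sum.inl.inj (e.symm.injective (Subtype.coe_injective h))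
    have h10 : (BCMgraph G).Adj (k 1) (k 0) :=
      hadjk 1 0 (by rw [SimpleGraph.pathGraph_adj]; omega)
    have h12 : (BCMgraph G).Adj (k 1) (k 2) :=
      hadjk 1 2 (by rw [SimpleGraph.pathGraph_adj]; omega)
    rcases triage (k 1) with ⟨⟨p, i⟩, h1⟩ | ⟨c, h1⟩ | ⟨c, h1⟩
    · rw [h1] at h10 h12
      rcases (by omega : i = 0 ∨ i = 1) with rfl | rfl
      · rcases nbr_q h10 with e0 | e0 <;> rcases nbr_q h12 with e2 | e2
        · exact absurd (hkinj 0 2 (e0.trans e2.symm)) (by decide)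
        · exact hanti 0 iy hiy (by rw [e0, hw]; exact adj_xy _ _)
        · exact hanti 2 iy hiy (by rw [e2, hw]; exact adj_xy _ _)
        · exact absurd (hkinj 0 2 (e0.trans e2.symm)) (by decide)
      · rcases nbr_t h10 with e0 | e0 <;> rcases nbr_t h12 with e2 | e2
        · exact absurd (hkinj 0 2 (e0.trans e2.symm)) (by decide)
        · exact hanti 2 ix hix (by rw [e2, hu]; exact (adj_xy _ _).symm)
        · exact hanti 0 ix hix (by rw [e0, hu]; exact (adj_xy _ _).symm)
        · exact absurd (hkinj 0 2 (e0.trans e2.symm)) (by decide)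
    · exact hanti 1 iy hiy (by rw [h1, hw]; exact adj_xy _ _)
    · exact hanti 1 ix hix (by rw [h1, hu]; exact (adj_xy _ _).symm)
  · rintro ⟨S, ⟨e⟩⟩
    refine s115 (fun i => ((e.symm i : S) : W G)) ?_ ?_
    · intro i j h
      exact e.symm.injective (Subtype.coe_injective h)
    · intro i j
      exact e.symm.map_adj_iff
end
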